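/- arXiv:2110.06179 — 7 statements merged into one kernel-verified Lean document; each statement's English description precedes it below -/
import Mathlib

section
/- If P is a set of n points in the plane in general position with n even, and R is a set of points disjoint from P such that every line through two points of P contains a point of R, then |R| ≥ n − 1. -/
open Classical in
lemma collinear_trans_aux {x y z r : ℝ × ℝ} (hxr : x ≠ r)
    (h1 : Collinear ℝ ({x, y, r} : Set (ℝ × ℝ)))
    (h2 : Collinear ℝ ({x, z, r} : Set (ℝ × ℝ))) :
    Collinear ℝ ({x, y, z} : Set (ℝ × ℝ)) := by
  have hy : y ∈ line[ℝ, x, r] :=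
    h1.mem_affineSpan_of_mem_of_ne (by simp) (by simp) (by simp) hxr
  have hz : z ∈ line[ℝ, x, r] :=
    h2.mem_affineSpan_of_mem_of_ne (by simp) (by simp) (by simp) hxr
  have h4 : Collinear ℝ ({y, z, x, r} : Set (ℝ × ℝ)) :=
    collinear_insert_insert_of_mem_affineSpan_pair hy hz
  exact h4.subset (by intro p hp; simp at hp ⊢; tauto)

/-- If `P` is a set of `n` points in the plane in general position with `n` even, and `R`
is a set of points disjoint from `P` such that every line through two points of `P`
contains a point of `R`, then `|R| ≥ n - 1`. -/
theorem stmt_1 (n : ℕ) (hn : Even n) (P R : Finset (ℝ × ℝ))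
    (hP : P.card = n)
    (hgen : ∀ x ∈ P, ∀ y ∈ P, ∀ z ∈ P, x ≠ y → x ≠ z → y ≠ z →
      ¬ Collinear ℝ ({x, y, z} : Set (ℝ × ℝ)))
    (hdisj : Disjoint P R)
    (hpierce : ∀ x ∈ P, ∀ y ∈ P, x ≠ y → ∃ r ∈ R, Collinear ℝ ({x, y, r} : Set (ℝ × ℝ))) :
    n - 1 ≤ R.card := by
  classical
  rcases Nat.eq_zero_or_pos n with h0 | hpos
  · simp [h0]
  obtain ⟨x, hx⟩ : ∃ x, x ∈ P := Finset.card_pos.mp (hP ▸ hpos)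
  set f : ℝ × ℝ → ℝ × ℝ := fun y =>
    if h : ∃ r ∈ R, Collinear ℝ ({x, y, r} : Set (ℝ × ℝ)) then h.choose else x with hf
  have hspec : ∀ y ∈ P.erase x, f y ∈ R ∧ Collinear ℝ ({x, y, f y} : Set (ℝ × ℝ)) := by
    intro y hy
    have hyP := Finset.mem_of_mem_erase hy
    have hne : x ≠ y := (Finset.ne_of_mem_erase hy).symm
    have h := hpierce x hx y hyP hne
    rw [hf]
    simp only [dif_pos h]
    exact ⟨h.choose_spec.1, h.choose_spec.2⟩
  have hinj : Set.InjOn f (P.erase x) := by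
    intro y hy z hz hyz
    simp only [Finset.coe_erase, Set.mem_diff, Set.mem_singleton_iff] at hy hz
    by_contra hne
    obtain ⟨h1, h2⟩ := hspec y (Finset.mem_erase.mpr ⟨hy.2, hy.1⟩)
    obtain ⟨h3, h4⟩ := hspec z (Finset.mem_erase.mpr ⟨hz.2, hz.1⟩)
    have hxr : x ≠ f y := by
      intro h; exact (Finset.disjoint_left.mp hdisj hx) (h ▸ h1)
    have hcol : Collinear ℝ ({x, y, z} : Set (ℝ × ℝ)) := by
      have h2' : Collinear ℝ ({x, y, f y} : Set (ℝ × ℝ)) := h2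
      have h4' : Collinear ℝ ({x, z, f y} : Set (ℝ × ℝ)) := hyz ▸ h4
      -- rearrange: collinear_trans_aux needs {x,y,r},{x,z,r}
      exact collinear_trans_aux hxr h2' h4'
    exact hgen x hx y hy.1 z hz.1 (Ne.symm hy.2) (Ne.symm hz.2) hne hcol
  have := Finset.card_le_card_of_injOn f (fun y hy => (hspec y hy).1) hinj
  rw [Finset.card_erase_of_mem hx, hP] at this
  exact this
end

section
/- If P₁ and P₂ are vertex sets of two regular m-gons inscribed in the same circle with P₁ ∩ P₂ = ∅, then the lines connecting a point of P₁ to a point of P₂ have at most m distinct directions. -/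
/-!
The chord from angle `θ₂` to angle `θ₁` on a circle is parallel to the tangent at the mid-angle
`(θ₁ + θ₂) / 2`. For vertices `2πj/m + α` and `2πk/m + β` the mid-angle is
`π(j + k)/m + (α + β)/2`, and the tangent direction at `φ` only depends on `φ` modulo `π`;
so the direction of the chord, which is nonzero as `P₁ ∩ P₂ = ∅`, only depends on
`(j + k) mod m`, which takes at most `m` values.
-/

open Real

noncomputable def tangentDir (φ : ℝ) : ℝ × ℝ := (-sin φ, cos φ)

lemma tangentDir_add_nat_mul_pi (φ : ℝ) (n : ℕ) :
    tangentDir (φ + n * π) = ((-1 : ℝ) ^ n) • tangentDir φ := by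
  simp [tangentDir, sin_add_nat_mul_pi, cos_add_nat_mul_pi]

lemma span_tangentDir_add_nat_mul_pi (φ : ℝ) (n : ℕ) :
    Submodule.span ℝ {tangentDir (φ + n * π)} = Submodule.span ℝ {tangentDir φ} := by
  rw [tangentDir_add_nat_mul_pi]
  exact Submodule.span_singleton_smul_eq (IsUnit.pow n isUnit_one.neg) _

lemma span_tangentDir_nat_mod (m n : ℕ) (γ : ℝ) :
    Submodule.span ℝ {tangentDir (π * n / m + γ)} =
      Submodule.span ℝ {tangentDir (π * (n % m : ℕ) / m + γ)} := by
  rcases eq_or_ne m 0 with rfl | hm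
  · simp
  have hangle : π * n / m + γ = π * (n % m : ℕ) / m + γ + (n / m : ℕ) * π := by
    conv_lhs => rw [← Nat.mod_add_div n m]
    push_cast
    field_simp
    ring
  rw [hangle, span_tangentDir_add_nat_mul_pi]

lemma circle_sub_circle (θ₁ θ₂ : ℝ) :
    ((cos θ₁, sin θ₁) : ℝ × ℝ) - (cos θ₂, sin θ₂) =
      (2 * sin ((θ₁ - θ₂) / 2)) • tangentDir ((θ₁ + θ₂) / 2) := by
  rw [tangentDir, Prod.mk_sub_mk, Prod.smul_mk, smul_eq_mul, smul_eq_mul, cos_sub_cos, sin_sub_sin]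
  congr 1; ring

lemma span_chord_eq_span_tangentDir (c : ℝ × ℝ) (ρ θ₁ θ₂ : ℝ)
    (hne : c + ρ • ((cos θ₁, sin θ₁) : ℝ × ℝ) ≠ c + ρ • (cos θ₂, sin θ₂)) :
    Submodule.span ℝ {c + ρ • ((cos θ₁, sin θ₁) : ℝ × ℝ) - (c + ρ • (cos θ₂, sin θ₂))} =
      Submodule.span ℝ {tangentDir ((θ₁ + θ₂) / 2)} := by
  rw [← sub_ne_zero] at hne
  rw [add_sub_add_left_eq_sub, ← smul_sub, circle_sub_circle, smul_smul] at hne ⊢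
  exact Submodule.span_singleton_smul_eq (left_ne_zero_of_smul hne).isUnit _

theorem stmt_4_general (m : ℕ) (c : ℝ × ℝ) (ρ α β : ℝ)
    (P₁ P₂ : Set (ℝ × ℝ))
    (hP₁ : P₁ = (fun k : ℕ =>
      c + ρ • (Real.cos (2 * π * k / m + α), Real.sin (2 * π * k / m + α))) '' {k | k < m})
    (hP₂ : P₂ = (fun k : ℕ =>
      c + ρ • (Real.cos (2 * π * k / m + β), Real.sin (2 * π * k / m + β))) '' {k | k < m})
    (hdisj : P₁ ∩ P₂ = ∅) :
    Set.ncard {d : Submodule ℝ (ℝ × ℝ) |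
      ∃ p ∈ P₁, ∃ q ∈ P₂, d = Submodule.span ℝ {p - q}} ≤ m := by
  set dir : ℕ → Submodule ℝ (ℝ × ℝ) :=
    fun s => Submodule.span ℝ {tangentDir (π * s / m + (α + β) / 2)}
  have hsub : {d : Submodule ℝ (ℝ × ℝ) | ∃ p ∈ P₁, ∃ q ∈ P₂, d = Submodule.span ℝ {p - q}} ⊆
      ↑((Finset.range m).image dir) := by
    rintro d ⟨p, hp, q, hq, rfl⟩
    have hpq : p ≠ q := fun h => Set.eq_empty_iff_forall_notMem.1 hdisj p ⟨hp, h ▸ hq⟩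
    rw [hP₁] at hp
    rw [hP₂] at hq
    obtain ⟨j, hj, rfl⟩ := hp
    obtain ⟨k, hk, rfl⟩ := hq
    have hmid : (2 * π * j / m + α + (2 * π * k / m + β)) / 2 =
        π * (j + k : ℕ) / m + (α + β) / 2 := by
      push_cast
      ring
    refine Finset.mem_image.2 ⟨(j + k) % m, Finset.mem_range.2 (Nat.mod_lt _ (by grind)), ?_⟩
    rw [span_chord_eq_span_tangentDir c ρ _ _ hpq, hmid, span_tangentDir_nat_mod]
  calc _ ≤ ((Finset.range m).image dir).card := by
        rw [← Set.ncard_coe_finset]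
        exact Set.ncard_le_ncard hsub (Finset.finite_toSet _)
    _ ≤ m := Finset.card_image_le.trans (Finset.card_range m).le

/-- If `P₁` and `P₂` are vertex sets of two regular `m`-gons inscribed in the same circle
with `P₁ ∩ P₂ = ∅`, then the lines connecting a point of `P₁` to a point of `P₂` have at
most `m` distinct directions. -/
theorem stmt_4 (m : ℕ) (hm : 3 ≤ m) (c : ℝ × ℝ) (ρ α β : ℝ) (hρ : 0 < ρ)
    (P₁ P₂ : Set (ℝ × ℝ))
    (hP₁ : P₁ = (fun k : ℕ =>
      c + ρ • (Real.cos (2 * π * k / m + α), Real.sin (2 * π * k / m + α))) '' {k | k < m})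
    (hP₂ : P₂ = (fun k : ℕ =>
      c + ρ • (Real.cos (2 * π * k / m + β), Real.sin (2 * π * k / m + β))) '' {k | k < m})
    (hdisj : P₁ ∩ P₂ = ∅) :
    Set.ncard {d : Submodule ℝ (ℝ × ℝ) |
      ∃ p ∈ P₁, ∃ q ∈ P₂, d = Submodule.span ℝ {p - q}} ≤ m :=
  stmt_4_general m c ρ α β P₁ P₂ hP₁ hP₂ hdisj
end

section
/- Let n be even and let P be the union of the vertex set P₁ of a regular (n/2)-gon inscribed in a circle Q and a rotation P₂ of P₁ about the center of Q by an angle that is an irrational multiple of π. Then P is a set of n points in general position lying on Q that determines exactly 3n/2 distinct directions. -/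
open Real Set

/-!
The chord joining the points of a circle at angles `a` and `b` is perpendicular to the radius at
angle `(a + b) / 2`, so its direction depends only on `a + b` modulo `2π`. With `m = n / 2`, the
points of `P` sit at angles `2πj/m + θ + eγ` with `j < m` and `e ∈ {0, 1}`, hence the chord
directions are indexed by the sums `2πs/m + 2θ + eγ` with `s < m` and `e ∈ {0, 1, 2}`.
Irrationality of `γ/π` makes these `3m` sums pairwise distinct modulo `2π`, and since `m ≥ 3`
every residue `s` is `j + j'` for two distinct `j, j'`, so each sum comes from a genuine chord.
Three distinct points of a circle are never collinear, because the chords from one of them to the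
other two have different angle sums.
-/

noncomputable section

def circlePoint (c : ℝ × ℝ) (ρ a : ℝ) : ℝ × ℝ := c + ρ • (cos a, sin a)

/-- The common direction of the chords of a circle whose endpoint angles sum to `s`. -/
def chordDirection (s : ℝ) : Submodule ℝ (ℝ × ℝ) := ℝ ∙ (-sin (s / 2), cos (s / 2))

def directions (P : Set (ℝ × ℝ)) : Set (Submodule ℝ (ℝ × ℝ)) :=
  {d | ∃ p ∈ P, ∃ q ∈ P, p ≠ q ∧ d = Submodule.span ℝ {p - q}}

lemma circlePoint_sub_circlePoint (c : ℝ × ℝ) (ρ a b : ℝ) :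
    circlePoint c ρ a - circlePoint c ρ b =
      (2 * ρ * sin ((a - b) / 2)) • (-sin ((a + b) / 2), cos ((a + b) / 2)) := by
  ext
  · simp only [circlePoint, Prod.fst_sub, Prod.fst_add, Prod.smul_fst, smul_eq_mul]
    rw [add_sub_add_left_eq_sub, ← mul_sub, cos_sub_cos]
    ring
  · simp only [circlePoint, Prod.snd_sub, Prod.snd_add, Prod.smul_snd, smul_eq_mul]
    rw [add_sub_add_left_eq_sub, ← mul_sub, sin_sub_sin]
    ring

lemma circlePoint_eq_of_coe_eq {c : ℝ × ℝ} {ρ a b : ℝ} (h : (a : Angle) = b) :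
    circlePoint c ρ a = circlePoint c ρ b := by
  rw [circlePoint, circlePoint, ← Angle.cos_coe, ← Angle.sin_coe, h, Angle.cos_coe,
    Angle.sin_coe]

lemma circlePoint_eq_iff {c : ℝ × ℝ} {ρ a b : ℝ} (hρ : ρ ≠ 0) :
    circlePoint c ρ a = circlePoint c ρ b ↔ (a : Angle) = b := by
  refine ⟨fun h => ?_, circlePoint_eq_of_coe_eq⟩
  have h' := smul_right_injective _ hρ (add_left_cancel h)
  exact Angle.cos_sin_inj (congrArg Prod.fst h') (congrArg Prod.snd h')

lemma chordDirection_eq_iff {s t : ℝ} :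
    chordDirection s = chordDirection t ↔ (s : Angle) = t := by
  rw [Angle.angle_eq_iff_two_pi_dvd_sub]
  constructor
  · intro h
    obtain ⟨r, hr⟩ := Submodule.mem_span_singleton.1
      (h ▸ Submodule.mem_span_singleton_self _ : (-sin (s / 2), cos (s / 2)) ∈ chordDirection t)
    have h₁ : r * -sin (t / 2) = -sin (s / 2) := congrArg Prod.fst hr
    have h₂ : r * cos (t / 2) = cos (s / 2) := congrArg Prod.snd hr
    obtain ⟨k, hk⟩ := sin_eq_zero_iff.1 (show sin (s / 2 - t / 2) = 0 by
      rw [sin_sub]; linear_combination cos (t / 2) * h₁ + sin (t / 2) * h₂)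
    exact ⟨k, by linarith⟩
  · rintro ⟨k, hk⟩
    have hs : s / 2 = t / 2 + k * π := by linarith
    have hu : ((-sin (s / 2), cos (s / 2)) : ℝ × ℝ) =
        ((-1 : ℝ) ^ k) • (-sin (t / 2), cos (t / 2)) := by
      ext <;> simp [hs, sin_add_int_mul_pi, cos_add_int_mul_pi]
    rw [chordDirection, chordDirection, hu, Submodule.span_singleton_smul_eq]
    exact (zpow_ne_zero _ (by norm_num)).isUnit

lemma span_circlePoint_sub {c : ℝ × ℝ} {ρ a b : ℝ}
    (h : circlePoint c ρ a ≠ circlePoint c ρ b) :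
    ℝ ∙ (circlePoint c ρ a - circlePoint c ρ b) = chordDirection (a + b) := by
  rw [← sub_ne_zero, circlePoint_sub_circlePoint] at h
  rw [circlePoint_sub_circlePoint,
    Submodule.span_singleton_smul_eq (left_ne_zero_of_smul h).isUnit, chordDirection, add_div]

lemma span_sub_eq_of_collinear {K V : Type*} [Field K] [AddCommGroup V] [Module K V]
    {x y z : V} (h : Collinear K {x, y, z}) (hy : y ≠ x) (hz : z ≠ x) :
    K ∙ (y - x) = K ∙ (z - x) := by
  obtain ⟨v, hv⟩ := (collinear_iff_of_mem (mem_insert x _)).1 h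
  have key : ∀ p ∈ ({x, y, z} : Set V), p ≠ x → K ∙ (p - x) = K ∙ v := by
    intro p hp hpx
    obtain ⟨r, rfl⟩ := hv p hp
    have hr : r ≠ 0 := by rintro rfl; simp at hpx
    rw [vadd_eq_add, add_sub_cancel_right]
    exact Submodule.span_singleton_smul_eq hr.isUnit v
  rw [key y (by simp) hy, key z (by simp) hz]

lemma not_collinear_circlePoint {c : ℝ × ℝ} {ρ a b d : ℝ}
    (hab : circlePoint c ρ a ≠ circlePoint c ρ b) (had : circlePoint c ρ a ≠ circlePoint c ρ d)
    (hbd : circlePoint c ρ b ≠ circlePoint c ρ d) :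
    ¬ Collinear ℝ {circlePoint c ρ a, circlePoint c ρ b, circlePoint c ρ d} := by
  intro h
  have hpar := span_sub_eq_of_collinear h hab.symm had.symm
  rw [span_circlePoint_sub hab.symm, span_circlePoint_sub had.symm, chordDirection_eq_iff,
    Angle.coe_add, Angle.coe_add, add_left_inj] at hpar
  exact hbd (circlePoint_eq_of_coe_eq hpar)

lemma directions_image_circlePoint {ι : Type*} {c : ℝ × ℝ} {ρ : ℝ} (hρ : ρ ≠ 0) (f : ι → ℝ)
    (S : Set ι) :
    directions ((fun i => circlePoint c ρ (f i)) '' S) =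
      {d | ∃ i ∈ S, ∃ j ∈ S, (f i : Angle) ≠ f j ∧ d = chordDirection (f i + f j)} := by
  ext d
  constructor
  · rintro ⟨_, ⟨i, hi, rfl⟩, _, ⟨j, hj, rfl⟩, hne, rfl⟩
    exact ⟨i, hi, j, hj, mt circlePoint_eq_of_coe_eq hne, span_circlePoint_sub hne⟩
  · rintro ⟨i, hi, j, hj, hne, rfl⟩
    have hne' := mt (circlePoint_eq_iff (c := c) hρ).1 hne
    exact ⟨_, mem_image_of_mem _ hi, _, mem_image_of_mem _ hj, hne',
      (span_circlePoint_sub hne').symm⟩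

def vertexAngle (m : ℕ) (θ γ : ℝ) (j e : ℕ) : ℝ := 2 * π * j / m + θ + e * γ

section vertexAngle

variable {m : ℕ} {θ γ : ℝ}

lemma vertexAngle_add (j e j' e' : ℕ) :
    vertexAngle m θ γ j e + vertexAngle m θ γ j' e' =
      vertexAngle m (2 * θ) γ (j + j') (e + e') := by
  unfold vertexAngle
  push_cast
  ring

lemma coe_vertexAngle_mod (hm : m ≠ 0) (j e : ℕ) :
    (vertexAngle m θ γ (j % m) e : Angle) = vertexAngle m θ γ j e := by
  obtain ⟨q, hq⟩ : ∃ q : ℕ, ((j % m : ℕ) : ℝ) = j - m * q :=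
    ⟨j / m, by rw [eq_sub_iff_add_eq]; exact_mod_cast Nat.mod_add_div j m⟩
  rw [Angle.angle_eq_iff_two_pi_dvd_sub]
  refine ⟨-q, ?_⟩
  unfold vertexAngle
  rw [hq]
  field_simp
  push_cast
  ring

lemma eq_of_coe_vertexAngle_eq (hγ : Irrational (γ / π)) {j e j' e' : ℕ} (hj : j < m)
    (hj' : j' < m) (h : (vertexAngle m θ γ j e : Angle) = vertexAngle m θ γ j' e') :
    j = j' ∧ e = e' := by
  obtain ⟨k, hk⟩ := Angle.angle_eq_iff_two_pi_dvd_sub.1 h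
  have hm : (m : ℝ) ≠ 0 := Nat.cast_ne_zero.2 (by omega)
  unfold vertexAngle at hk
  have he : e = e' := by
    by_contra hne
    have hint :
        (((e - e' : ℤ) * m : ℤ) : ℝ) * (γ / π) = ((2 * (k * m - j + j') : ℤ) : ℝ) := by
      push_cast
      field_simp
      field_simp at hk
      linear_combination hk
    have hem : (e - e' : ℤ) * m ≠ 0 := mul_ne_zero (by omega) (by omega)
    exact (hγ.intCast_mul hem).ne_int _ hint
  subst he
  have hdiff : (j : ℤ) - j' = k * m := by
    have : 2 * π * ((j : ℝ) - j') = 2 * π * (k * m) := by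
      field_simp at hk
      linear_combination hk
    exact_mod_cast mul_left_cancel₀ (by positivity) this
  have hzero := Int.eq_zero_of_abs_lt_dvd ⟨k, by rw [hdiff, mul_comm]⟩
    (abs_sub_lt_iff.2 ⟨by omega, by omega⟩)
  omega

lemma ncard_image_vertexAngle {X : Type*} {f : ℝ → X}
    (hf : ∀ a b, f a = f b → (a : Angle) = b) (hγ : Irrational (γ / π)) (k : ℕ) :
    ((fun p : ℕ × ℕ => f (vertexAngle m θ γ p.1 p.2)) '' (Iio m ×ˢ Iio k)).ncard = m * k := by
  rw [InjOn.ncard_image, ncard_prod, ncard_Iio_nat, ncard_Iio_nat]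
  rintro ⟨j, e⟩ ⟨hj, -⟩ ⟨j', e'⟩ ⟨hj', -⟩ h
  obtain ⟨rfl, rfl⟩ := eq_of_coe_vertexAngle_eq hγ hj hj' (hf _ _ h)
  rfl

end vertexAngle

lemma exists_ne_add_mod_eq {m s : ℕ} (hm : 3 ≤ m) (hs : s < m) :
    ∃ j j', j < m ∧ j' < m ∧ j ≠ j' ∧ (j + j') % m = s := by
  rcases Nat.eq_zero_or_pos s with rfl | hs0
  · refine ⟨1, m - 1, by omega, by omega, by omega, ?_⟩
    rw [Nat.add_sub_cancel' (by omega), Nat.mod_self]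
  · exact ⟨0, s, by omega, hs, by omega, by rw [zero_add, Nat.mod_eq_of_lt hs]⟩

lemma directions_image_circlePoint_vertexAngle {c : ℝ × ℝ} {ρ θ γ : ℝ} {m : ℕ} (hρ : ρ ≠ 0)
    (hm : 3 ≤ m) (hγ : Irrational (γ / π)) :
    directions
        ((fun p : ℕ × ℕ => circlePoint c ρ (vertexAngle m θ γ p.1 p.2)) '' (Iio m ×ˢ Iio 2)) =
      (fun p : ℕ × ℕ => chordDirection (vertexAngle m (2 * θ) γ p.1 p.2)) '' (Iio m ×ˢ Iio 3) := by
  rw [directions_image_circlePoint hρ]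
  ext d
  constructor
  · rintro ⟨⟨j, e⟩, ⟨-, he⟩, ⟨j', e'⟩, ⟨-, he'⟩, -, rfl⟩
    refine ⟨((j + j') % m, e + e'), ⟨Nat.mod_lt _ (by omega), ?_⟩, ?_⟩
    · simp only [mem_Iio] at he he' ⊢
      omega
    · rw [vertexAngle_add, chordDirection_eq_iff, coe_vertexAngle_mod (by omega)]
  · rintro ⟨⟨s, e⟩, ⟨hs, he⟩, rfl⟩
    simp only [mem_Iio] at hs he
    obtain ⟨j, j', hj, hj', hne, hjj'⟩ := exists_ne_add_mod_eq hm hs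
    refine ⟨(j, e / 2), ⟨hj, by simp only [mem_Iio]; omega⟩, (j', e - e / 2),
      ⟨hj', by simp only [mem_Iio]; omega⟩,
      fun h => hne (eq_of_coe_vertexAngle_eq hγ hj hj' h).1, ?_⟩
    subst hjj'
    dsimp only
    rw [vertexAngle_add, chordDirection_eq_iff, coe_vertexAngle_mod (by omega),
      Nat.add_sub_cancel' (Nat.div_le_self _ _)]

lemma image_prod_Iio_two {α β : Type*} (g : α → ℕ → β) (S : Set α) :
    (fun p : α × ℕ => g p.1 p.2) '' (S ×ˢ Iio 2) = (g · 0) '' S ∪ (g · 1) '' S := by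
  rw [show Iio 2 = {0, 1} by ext; simp; omega, prod_insert, prod_singleton, image_union,
    image_image, image_image]

end

/-- Let `n` be even and `P` the union of the vertex set `P₁` of a regular `(n/2)`-gon
inscribed in a circle and a rotation `P₂` of `P₁` about the center by an angle `γ` with
`γ/π` irrational. Then `P` consists of `n` points in general position and determines
exactly `3n/2` distinct directions. -/
theorem stmt_5 (n : ℕ) (hn : Even n) (h3 : 3 ≤ n / 2) (c : ℝ × ℝ) (ρ θ γ : ℝ)
    (hρ : 0 < ρ) (hγ : Irrational (γ / π))
    (P₁ P₂ P : Set (ℝ × ℝ))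
    (hP₁ : P₁ = (fun k : ℕ =>
      c + ρ • (Real.cos (2 * π * k / (n / 2) + θ),
               Real.sin (2 * π * k / (n / 2) + θ))) '' {k | k < n / 2})
    (hP₂ : P₂ = (fun k : ℕ =>
      c + ρ • (Real.cos (2 * π * k / (n / 2) + θ + γ),
               Real.sin (2 * π * k / (n / 2) + θ + γ))) '' {k | k < n / 2})
    (hP : P = P₁ ∪ P₂) :
    P.ncard = n ∧
    (∀ x ∈ P, ∀ y ∈ P, ∀ z ∈ P, x ≠ y → x ≠ z → y ≠ z →
      ¬ Collinear ℝ ({x, y, z} : Set (ℝ × ℝ))) ∧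
    Set.ncard {d : Submodule ℝ (ℝ × ℝ) |
      ∃ p ∈ P, ∃ q ∈ P, p ≠ q ∧ d = Submodule.span ℝ {p - q}} = 3 * n / 2 := by
  obtain ⟨m, rfl⟩ := hn
  have hm : (m + m) / 2 = m := by omega
  rw [hm] at h3 hP₁ hP₂
  have hPF :
      P = (fun p : ℕ × ℕ => circlePoint c ρ (vertexAngle m θ γ p.1 p.2)) '' (Iio m ×ˢ Iio 2) := by
    rw [hP, hP₁, hP₂, image_prod_Iio_two (fun j e => circlePoint c ρ (vertexAngle m θ γ j e))]
    simp [circlePoint, vertexAngle, Iio_def]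
  subst hPF
  refine ⟨?_, ?_, ?_⟩
  · rw [ncard_image_vertexAngle (fun _ _ => (circlePoint_eq_iff hρ.ne').1) hγ]
    omega
  · rintro _ ⟨_, -, rfl⟩ _ ⟨_, -, rfl⟩ _ ⟨_, -, rfl⟩
    exact not_collinear_circlePoint
  · change (directions _).ncard = _
    rw [directions_image_circlePoint_vertexAngle hρ.ne' h3 hγ,
      ncard_image_vertexAngle (fun _ _ => chordDirection_eq_iff.1) hγ]
    omega
end

section
/- Let F be an abelian group and A₁, A₂ finite subsets with |A₁| ≥ |A₂| ≥ (3/4)|A₁| and |A₁ + A₂| < (3/2)|A₁|. Let H be the stabilizer of A₁ + A₂, i.e., H = {x ∈ F : x + A₁ + A₂ = A₁ + A₂}. Then A₁ + A₂ is a coset of H, and each of A₁ and A₂ is contained in a coset of H. -/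
/-!
Let `n = #A₁`, `m = #A₂`, `k = #(A₁ + A₂)` and let `r(d)` count the pairs `x, y ∈ A₁` with
`x - y = d`. As `k < 2m`, any two translates `x + A₂` with `x ∈ A₁` meet inside `A₁ + A₂`, so
`A₁ - A₁ ⊆ A₂ - A₂`; symmetrically `A₂ - A₂ ⊆ A₁ - A₁`. Two translates of `A₁` by elements of
`A₂` meet in at least `2n - k > n / 2` points, so `r(d) > n / 2` on `A₂ - A₂`, and then any two
`d, d' ∈ A₁ - A₁` have `d - d' ∈ A₁ - A₁`. Thus `K = A₁ - A₁ = A₂ - A₂` is a subgroup,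
`A₁ ⊆ a + K`, `A₂ ⊆ b + K` and `A₁ + A₂ ⊆ a + b + K`.

If some `w ∈ a + b + K` were not in `A₁ + A₂`, then `A₁` and `w - A₂` would be disjoint in
`a + K`, so `n + m ≤ #K`; and the translates `w - A₁` of the missed points `w` avoid `A₂`, which
gives `r ≥ 2n + m - #K` on the difference set of the missed points. Summing `r` over `K`, where it
totals `n²`, with `r ≥ 2n - k` everywhere and the stronger bound on that difference set, contradicts
the size conditions. Hence `A₁ + A₂ = a + b + K`, whose stabilizer is `K`.
-/

open Pointwise

namespace Finset

lemma card_nsmul_add_card_nsmul_le_sum {ι M : Type*} [DecidableEq ι] [AddCommMonoid M]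
    [PartialOrder M] [IsOrderedAddMonoid M] {D E : Finset ι} (hED : E ⊆ D) {f : ι → M}
    {c c' : M} (h : ∀ i ∈ D, c ≤ f i) (h' : ∀ i ∈ E, c' ≤ f i) :
    #(D \ E) • c + #E • c' ≤ ∑ i ∈ D, f i := by
  rw [← sum_sdiff hED]
  exact add_le_add (card_nsmul_le_sum _ _ _ fun i hi ↦ h i (mem_sdiff.1 hi).1)
    (card_nsmul_le_sum _ _ _ h')

lemma mul_self_lt_sum_of_forall_le {ι : Type*} [DecidableEq ι] {D E : Finset ι} (hED : E ⊆ D)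
    {f : ι → ℕ} {n m k : ℕ} (hmn : m ≤ n) (h34 : 3 * n ≤ 4 * m) (h32 : 2 * k < 3 * n)
    (hnk : n ≤ k) (hD : n + m ≤ #D) (hE : #D ≤ k + #E) (h : ∀ i ∈ D, 2 * n ≤ k + f i)
    (h' : ∀ i ∈ E, 2 * n + m ≤ #D + f i) : n * n < ∑ i ∈ D, f i := by
  zify at *
  have hglob := card_nsmul_le_sum D (fun i ↦ (f i : ℤ)) (2 * n - k) fun i hi ↦ by
    linarith [h i hi]
  have hsplit := card_nsmul_add_card_nsmul_le_sum hED (f := fun i ↦ (f i : ℤ))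
    (c := 2 * n - k) (c' := 2 * n + m - #D) (fun i hi ↦ by linarith [h i hi])
    fun i hi ↦ by linarith [h' i hi]
  rw [nsmul_eq_mul] at hglob
  rw [nsmul_eq_mul, nsmul_eq_mul, card_sdiff_of_subset hED, Nat.cast_sub (card_le_card hED)]
    at hsplit
  by_contra! hsum
  -- `(k + m) (2n - k)` is concave in `k` and exceeds `n²` at both ends `k = n`, `k = 3n / 2`.
  have hkm : (n : ℤ) * n < (k + m) * (2 * n - k) := by
    nlinarith [sq_nonneg (3 * (n : ℤ) - 2 * k), sq_nonneg ((n : ℤ) - m)]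
  have hDkm : (#D : ℤ) < k + m := by nlinarith
  nlinarith [mul_nonneg (by linarith : (0 : ℤ) ≤ #D - n - m)
      (by linarith : (0 : ℤ) ≤ k + m - 1 - #D),
    mul_nonneg (by linarith : (0 : ℤ) ≤ #E + k - #D) (by linarith : (0 : ℤ) ≤ k + m - #D)]

variable {F : Type*} [AddCommGroup F] [DecidableEq F] {s t D Y Z : Finset F}
  {a b c c' d w w' x y z : F}

lemma addConvolution_comm (s t : Finset F) : s.addConvolution t = t.addConvolution s := by
  ext x
  exact card_nbij' Prod.swap Prod.swap (by aesop (add simp [Set.MapsTo, add_comm]))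
    (by aesop (add simp [Set.MapsTo, add_comm])) (by simp [Set.LeftInvOn])
    (by simp [Set.LeftInvOn])

lemma sum_addConvolution (h : s + t ⊆ D) : ∑ x ∈ D, s.addConvolution t x = #s * #t := by
  rw [← card_product]
  exact (card_eq_sum_card_fiberwise fun p hp ↦
    h (add_mem_add (mem_product.1 hp).1 (mem_product.1 hp).2)).symm

lemma two_mul_card_le_card_add_addConvolution_of_vadd_subset (hx : x +ᵥ s ⊆ Z)
    (hy : y +ᵥ s ⊆ Z) : 2 * #s ≤ #Z + s.addConvolution (-s) (-x + y) := by
  have := card_union_add_card_inter (x +ᵥ s) (y +ᵥ s)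
  have := card_le_card (union_subset hx hy)
  rw [card_vadd_finset, card_vadd_finset, card_vadd_inter_vadd] at *
  omega

lemma sub_mem_sub_of_mem_vadd_finset (hx : z ∈ x +ᵥ s) (hy : z ∈ y +ᵥ s) : x - y ∈ s - s := by
  obtain ⟨p, hp, rfl⟩ := mem_vadd_finset.1 hx
  obtain ⟨q, hq, hqp⟩ := mem_vadd_finset.1 hy
  rw [vadd_eq_add, vadd_eq_add] at hqp
  exact mem_sub.2 ⟨q, hq, p, hp, by rw [sub_eq_sub_iff_add_eq_add, add_comm q, hqp]⟩

lemma sub_subset_sub_of_card_add_lt (h : #(s + t) < 2 * #t) : s - s ⊆ t - t := by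
  intro d hd
  obtain ⟨x, hx, y, hy, rfl⟩ := mem_sub.1 hd
  obtain ⟨z, hz⟩ := inter_nonempty_of_card_lt_card_add_card
    (vadd_finset_subset_add (t := t) hx) (vadd_finset_subset_add (t := t) hy)
    (by rwa [card_vadd_finset, card_vadd_finset, ← two_mul])
  exact sub_mem_sub_of_mem_vadd_finset (mem_inter.1 hz).1 (mem_inter.1 hz).2

lemma two_mul_card_le_card_add_add_addConvolution (hd : d ∈ t - t) :
    2 * #s ≤ #(s + t) + s.addConvolution (-s) d := by
  obtain ⟨x, hx, y, hy, rfl⟩ := mem_sub.1 hd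
  rw [sub_eq_neg_add]
  exact two_mul_card_le_card_add_addConvolution_of_vadd_subset
    (add_comm s t ▸ vadd_finset_subset_add hy) (add_comm s t ▸ vadd_finset_subset_add hx)

lemma sub_mem_sub_of_two_mul_card_add_lt (h : 2 * #(s + t) < 3 * #s) (hst : s - s ⊆ t - t)
    (hx : x ∈ s - s) (hy : y ∈ s - s) : x - y ∈ s - s := by
  have hx' := two_mul_card_le_card_add_add_addConvolution (s := s) (hst hx)
  have hy' := two_mul_card_le_card_add_add_addConvolution (s := s) (hst hy)
  rw [← card_inter_vadd] at hx' hy'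
  obtain ⟨z, hz⟩ := inter_nonempty_of_card_lt_card_add_card
    (inter_subset_left (s₁ := s) (s₂ := x +ᵥ s)) (inter_subset_left (s₁ := s) (s₂ := y +ᵥ s))
    (by omega)
  exact sub_mem_sub_of_mem_vadd_finset (mem_inter.1 (mem_inter.1 hz).1).2
    (mem_inter.1 (mem_inter.1 hz).2).2

lemma disjoint_vadd_neg_of_notMem_add (hw : w ∉ s + t) : Disjoint s (w +ᵥ -t) := by
  refine disjoint_left.2 fun x hx hxw ↦ hw ?_
  obtain ⟨y, hy, rfl⟩ := mem_vadd_finset.1 hxw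
  simpa using add_mem_add hx (mem_neg'.1 hy)

lemma card_add_card_le_of_notMem_add (hw : w ∉ s + t) (hsY : s ⊆ Y) (htY : w +ᵥ -t ⊆ Y) :
    #s + #t ≤ #Y := by
  rw [← card_neg t, ← card_vadd_finset w (-t),
    ← card_union_of_disjoint (disjoint_vadd_neg_of_notMem_add hw)]
  exact card_le_card (union_subset hsY htY)

lemma two_mul_card_add_card_le_card_add_addConvolution (hw : w ∉ s + t) (hw' : w' ∉ s + t)
    (hwY : w +ᵥ -s ⊆ Y) (hw'Y : w' +ᵥ -s ⊆ Y) (htY : t ⊆ Y) :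
    2 * #s + #t ≤ #Y + s.addConvolution (-s) (w - w') := by
  rw [add_comm s t] at hw hw'
  have hZ (v : F) (hv : v ∉ t + s) (hvY : v +ᵥ -s ⊆ Y) : v +ᵥ -s ⊆ Y \ t := fun x hx ↦
    mem_sdiff.2 ⟨hvY hx, fun hxt ↦ disjoint_left.1 (disjoint_vadd_neg_of_notMem_add hv) hxt hx⟩
  have := two_mul_card_le_card_add_addConvolution_of_vadd_subset (hZ w' hw' hw'Y) (hZ w hw hwY)
  rw [card_neg, neg_neg, addConvolution_comm, card_sdiff_of_subset htY, neg_add_eq_sub] at this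
  have := card_le_card htY
  omega

section Coset

variable {K : AddSubgroup F}

lemma mem_vadd_finset_iff_of_coe_eq (hK : (D : Set F) = K) : x ∈ c +ᵥ D ↔ -c + x ∈ K := by
  rw [← mem_coe, coe_vadd_finset, hK, mem_leftAddCoset_iff, SetLike.mem_coe]

lemma add_mem_vadd_finset_of_coe_eq (hK : (D : Set F) = K) (hx : x ∈ c +ᵥ D) (hy : y ∈ c' +ᵥ D) :
    x + y ∈ (c + c') +ᵥ D := by
  rw [mem_vadd_finset_iff_of_coe_eq hK] at *
  convert K.add_mem hx hy using 1
  abel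

lemma sub_mem_vadd_finset_of_coe_eq (hK : (D : Set F) = K) (hx : x ∈ c +ᵥ D) (hy : y ∈ c' +ᵥ D) :
    x - y ∈ (c - c') +ᵥ D := by
  rw [mem_vadd_finset_iff_of_coe_eq hK] at *
  convert K.sub_mem hx hy using 1
  abel

theorem add_eq_vadd_of_card_add_lt (hK : (D : Set F) = K) (hs : s ⊆ a +ᵥ D) (ht : t ⊆ b +ᵥ D)
    (hDt : D ⊆ t - t) (hts : #t ≤ #s) (h34 : 3 * #s ≤ 4 * #t) (h32 : 2 * #(s + t) < 3 * #s) :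
    s + t = (a + b) +ᵥ D := by
  have hsub : s + t ⊆ (a + b) +ᵥ D := by
    intro z hz
    obtain ⟨x, hx, y, hy, rfl⟩ := mem_add.1 hz
    exact add_mem_vadd_finset_of_coe_eq hK (hs hx) (ht hy)
  have hdiff {c : F} {X : Finset F} (hX : X ⊆ c +ᵥ D) : X - X ⊆ D := by
    intro z hz
    obtain ⟨x, hx, y, hy, rfl⟩ := mem_sub.1 hz
    simpa using sub_mem_vadd_finset_of_coe_eq hK (hX hx) (hX hy)
  by_contra hne
  obtain ⟨w, hwD, hw⟩ := exists_of_ssubset (hsub.ssubset_of_ne hne)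
  set W := ((a + b) +ᵥ D) \ (s + t)
  have hN : #s + #t ≤ #D := by
    rw [← card_vadd_finset a D]
    refine card_add_card_le_of_notMem_add hw hs fun z hz ↦ ?_
    obtain ⟨y, hy, rfl⟩ := mem_vadd_finset.1 hz
    simpa [← sub_eq_add_neg] using sub_mem_vadd_finset_of_coe_eq hK hwD (ht (mem_neg'.1 hy))
  have hW : #D ≤ #(s + t) + #(W - W) := by
    have hWcard : #W + #(s + t) = #D := by
      rw [card_sdiff_add_card_eq_card hsub, card_vadd_finset]
    have := card_le_card_sub_left (s := W) (t := W) ⟨w, mem_sdiff.2 ⟨hwD, hw⟩⟩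
    omega
  have hpopW : ∀ d ∈ W - W, 2 * #s + #t ≤ #D + s.addConvolution (-s) d := by
    intro d hd
    obtain ⟨x, hx, y, hy, rfl⟩ := mem_sub.1 hd
    have hY {v : F} (hv : v ∈ W) : v +ᵥ -s ⊆ b +ᵥ D := fun z hz ↦ by
      obtain ⟨u, hu, rfl⟩ := mem_vadd_finset.1 hz
      simpa [← sub_eq_add_neg] using
        sub_mem_vadd_finset_of_coe_eq hK (mem_sdiff.1 hv).1 (hs (mem_neg'.1 hu))
    rw [← card_vadd_finset b D]
    exact two_mul_card_add_card_le_card_add_addConvolution (mem_sdiff.1 hx).2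
      (mem_sdiff.1 hy).2 (hY hx) (hY hy) ht
  refine (mul_self_lt_sum_of_forall_le (hdiff sdiff_subset) hts h34 h32
    (card_le_card_add_right (card_pos.1 (by omega))) hN hW
    (fun d hd ↦ two_mul_card_le_card_add_add_addConvolution (hDt hd)) hpopW).ne' ?_
  rw [sum_addConvolution (sub_eq_add_neg s s ▸ hdiff hs), card_neg]

end Coset

lemma subset_vadd_finset_of_sub_subset (ha : a ∈ s) (hs : s - s ⊆ D) : s ⊆ a +ᵥ D :=
  fun x hx ↦ mem_vadd_finset.2 ⟨x - a, hs (sub_mem_sub hx ha), by simp⟩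

theorem exists_addSubgroup_coe_add_eq_vadd (hts : #t ≤ #s) (h34 : 3 * #s ≤ 4 * #t)
    (h32 : 2 * #(s + t) < 3 * #s) (ha : a ∈ s) (hb : b ∈ t) :
    ∃ K : AddSubgroup F, ((s + t : Finset F) : Set F) = (a + b) +ᵥ (K : Set F) ∧
      (s : Set F) ⊆ a +ᵥ (K : Set F) ∧ (t : Set F) ⊆ b +ᵥ (K : Set F) := by
  have hst : s - s ⊆ t - t := sub_subset_sub_of_card_add_lt (by omega)
  have hts' : t - t ⊆ s - s := sub_subset_sub_of_card_add_lt (by rw [add_comm]; omega)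
  let K := AddSubgroup.ofSub ((s - s : Finset F) : Set F) ⟨a - a, sub_mem_sub ha ha⟩
    fun x hx y hy ↦ by
      rw [← sub_eq_add_neg]; exact sub_mem_sub_of_two_mul_card_add_lt h32 hst hx hy
  have hK : ((s - s : Finset F) : Set F) = K := rfl
  have hs := subset_vadd_finset_of_sub_subset ha subset_rfl
  have ht := subset_vadd_finset_of_sub_subset hb hts'
  refine ⟨K, ?_, ?_, ?_⟩ <;> rw [← hK, ← coe_vadd_finset]
  · rw [add_eq_vadd_of_card_add_lt hK hs ht hst hts h34 h32]
  · exact_mod_cast hs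
  · exact_mod_cast ht

end Finset

lemma Set.singleton_add_eq_vadd {F : Type*} [Add F] (x : F) (S : Set F) : {x} + S = x +ᵥ S :=
  Set.singleton_add

/-- Kneser-type lemma: if `A₁, A₂` are finite subsets of an abelian group with
`|A₁| ≥ |A₂| ≥ (3/4)|A₁|` and `|A₁ + A₂| < (3/2)|A₁|`, and `H` is the stabilizer of
`A₁ + A₂`, then `A₁ + A₂` is a coset of `H`, and each of `A₁`, `A₂` is contained in a
coset of `H`. -/
theorem stmt_6 {F : Type*} [AddCommGroup F] (A₁ A₂ : Set F)
    (hfin₁ : A₁.Finite) (hfin₂ : A₂.Finite) (hne₁ : A₁.Nonempty) (hne₂ : A₂.Nonempty)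
    (hle : A₂.ncard ≤ A₁.ncard)
    (h34 : 3 * A₁.ncard ≤ 4 * A₂.ncard)
    (h32 : 2 * (A₁ + A₂).ncard < 3 * A₁.ncard)
    (H : AddSubgroup F)
    (hH : (H : Set F) = {x : F | {x} + (A₁ + A₂) = A₁ + A₂}) :
    (∃ a : F, A₁ + A₂ = {a} + (H : Set F)) ∧
    (∃ a : F, A₁ ⊆ {a} + (H : Set F)) ∧
    (∃ a : F, A₂ ⊆ {a} + (H : Set F)) := by
  classical
  obtain ⟨s, rfl⟩ := hfin₁.exists_finset_coe
  obtain ⟨t, rfl⟩ := hfin₂.exists_finset_coe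
  obtain ⟨a, ha⟩ := hne₁
  obtain ⟨b, hb⟩ := hne₂
  rw [← Finset.coe_add] at h32 hH ⊢
  simp only [Set.ncard_coe_finset] at hle h34 h32
  obtain ⟨K, hst, hsK, htK⟩ := Finset.exists_addSubgroup_coe_add_eq_vadd hle h34 h32 ha hb
  have hHK : H = K := by
    rw [← AddAction.stabilizer_addSubgroup K, ← AddAction.stabilizer_vadd_eq_right (a + b), ← hst]
    ext x
    rw [← SetLike.mem_coe, hH, Set.mem_ofPred_eq, AddAction.mem_stabilizer_iff,
      Set.singleton_add_eq_vadd]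
  subst hHK
  simp only [Set.singleton_add_eq_vadd]
  exact ⟨⟨a + b, hst⟩, ⟨a, hsK⟩, ⟨b, htK⟩⟩
end

section
/- Let B, G, R be pairwise disjoint finite subsets of an irreducible plane cubic curve c (with its abelian group structure in which three points sum to zero iff they are collinear), with |B| = |G| = n, B ∪ G in general position, |R| < (3/2)n, and such that every line through a point of B and a point of G passes through a point of R. Then there is a subgroup H of c with |H| ≤ |R| such that B and G are each contained in a coset of H. -/
/-!
Put `S = B + G`; since `B + G ⊆ -R`, `|S| ≤ |R|` and `2|S| < 3n`. For `b, b' ∈ B` the translates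
`b + G` and `b' + G` both lie in `S`, so they share more than `n / 2` points: every `x ∈ B - B`
has more than `n / 2` representations `x = g - g'` with `g, g' ∈ G`. For two such `x, y` the sets
`G ∩ (x + G)` and `G ∩ (y + G)` meet, whence `x - y ∈ G - G`. Together with the symmetric
statement this makes `H = B - B = G - G` a subgroup, and counting representations gives
`|H| < 2n`. Then for every `h ∈ H` the `n`-element subsets `B - b` and `h + g - G` of `H` meet,
so `b + g + H ⊆ S` and `|H| ≤ |S| ≤ |R|`.
-/

open Pointwise

namespace Finset

variable {α : Type*} [AddCommGroup α] [DecidableEq α] {A B : Finset α} {a b x y : α}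

lemma sum_addConvolution_s8 (A B : Finset α) : ∑ x ∈ A + B, A.addConvolution B x = #A * #B := by
  rw [← card_product, card_eq_sum_card_fiberwise (f := fun ab ↦ ab.1 + ab.2)]
  · rfl
  · rintro ⟨a, b⟩ hab
    exact add_mem_add (mem_product.1 hab).1 (mem_product.1 hab).2

lemma two_mul_card_le_card_add_add_addConvolution_s8 (ha : a ∈ A) (hb : b ∈ A) :
    2 * #B ≤ #(A + B) + B.addConvolution (-B) (a - b) := by
  have hunion : #((b +ᵥ B) ∪ (a +ᵥ B)) ≤ #(A + B) :=
    card_le_card (union_subset (vadd_finset_subset_add hb) (vadd_finset_subset_add ha))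
  have hinter : #((b +ᵥ B) ∩ (a +ᵥ B)) = B.addConvolution (-B) (a - b) := by
    rw [card_vadd_inter_vadd, neg_add_eq_sub]
  have := card_union_add_card_inter (b +ᵥ B) (a +ᵥ B)
  simp only [card_vadd_finset] at this
  omega

lemma card_lt_two_mul_addConvolution (h : 2 * #(A + B) < 3 * #B) (hx : x ∈ A - A) :
    #B < 2 * B.addConvolution (-B) x := by
  obtain ⟨a, ha, b, hb, rfl⟩ := mem_sub.1 hx
  have := two_mul_card_le_card_add_add_addConvolution_s8 (B := B) ha hb
  omega

lemma sub_mem_sub_of_card_lt_two_mul_addConvolution (hx : #B < 2 * B.addConvolution (-B) x)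
    (hy : #B < 2 * B.addConvolution (-B) y) : x - y ∈ B - B := by
  rw [← card_inter_vadd] at hx hy
  obtain ⟨t, ht⟩ := inter_nonempty_of_card_lt_card_add_card inter_subset_left inter_subset_left
    (show #B < #(B ∩ (x +ᵥ B)) + #(B ∩ (y +ᵥ B)) by omega)
  simp only [mem_inter, mem_vadd_finset, vadd_eq_add] at ht
  obtain ⟨⟨-, b, hb, rfl⟩, -, b', hb', hyb'⟩ := ht
  exact mem_sub.2 ⟨b', hb', b, hb, by rw [sub_eq_sub_iff_add_eq_add, add_comm, hyb']⟩

lemma sub_sub_sub_subset_sub (h : 2 * #(A + B) < 3 * #B) : A - A - (A - A) ⊆ B - B := by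
  intro z hz
  obtain ⟨x, hx, y, hy, rfl⟩ := mem_sub.1 hz
  exact sub_mem_sub_of_card_lt_two_mul_addConvolution
    (card_lt_two_mul_addConvolution h hx) (card_lt_two_mul_addConvolution h hy)

lemma sub_self_subset_of_two_mul_card_add_lt (hA : 2 * #(A + B) < 3 * #A)
    (hB : 2 * #(A + B) < 3 * #B) : A - A ⊆ B - B := by
  have hAne : A.Nonempty := by rw [← card_pos]; omega
  exact (subset_sub_left hAne.zero_mem_sub).trans (sub_sub_sub_subset_sub hB)

lemma sub_self_eq_of_two_mul_card_add_lt (hA : 2 * #(A + B) < 3 * #A)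
    (hB : 2 * #(A + B) < 3 * #B) : A - A = B - B := by
  refine (sub_self_subset_of_two_mul_card_add_lt hA hB).antisymm ?_
  rw [add_comm] at hA hB
  exact sub_self_subset_of_two_mul_card_add_lt hB hA

lemma card_sub_self_lt_two_mul (hB : B.Nonempty)
    (h : ∀ x ∈ B - B, #B < 2 * B.addConvolution (-B) x) : #(B - B) < 2 * #B := by
  have hsum : #(B - B) * #B < 2 * (#B * #B) := by
    have hcount := sum_addConvolution_s8 B (-B)
    rw [← sub_eq_add_neg, card_neg] at hcount
    rw [← hcount, mul_sum]
    simpa [mul_comm] using sum_lt_sum_of_nonempty (sub_nonempty.2 ⟨hB, hB⟩) h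
  exact Nat.lt_of_mul_lt_mul_right (a := #B) (by linarith)

lemma card_sub_self_le_card_add (ha : a ∈ A) (hb : b ∈ B) (hAB : A - A = B - B)
    (hsub : A - A - (A - A) ⊆ A - A) (hcard : #(A - A) < #A + #B) : #(A - A) ≤ #(A + B) := by
  refine card_le_card_of_injOn (a + b + ·) (fun z hz ↦ ?_) (fun _ _ _ _ ↦ add_left_cancel)
  simp only [mem_coe] at hz ⊢
  have hA : (-a) +ᵥ A ⊆ A - A := by
    intro w hw
    obtain ⟨x, hx, rfl⟩ := mem_vadd_finset.1 hw
    rw [vadd_eq_add, ← sub_eq_neg_add]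
    exact sub_mem_sub hx ha
  have hB : (z + b) +ᵥ -B ⊆ A - A := by
    intro w hw
    obtain ⟨y, hy, rfl⟩ := mem_vadd_finset.1 hw
    have : z - (-y - b) ∈ A - A := hsub (sub_mem_sub hz (hAB ▸ sub_mem_sub (mem_neg'.1 hy) hb))
    rwa [vadd_eq_add, show z + b + y = z - (-y - b) by abel]
  obtain ⟨t, ht⟩ := inter_nonempty_of_card_lt_card_add_card hA hB
    (by rwa [card_vadd_finset, card_vadd_finset, card_neg])
  simp only [mem_inter, mem_vadd_finset, vadd_eq_add] at ht
  obtain ⟨⟨x, hx, hxt⟩, y, hy, hyt⟩ := ht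
  obtain rfl := neg_add_eq_iff_eq_add.1 hxt
  obtain rfl := eq_sub_of_add_eq' hyt
  exact mem_add.2 ⟨a + t, hx, _, mem_neg'.1 hy, by abel⟩

lemma coe_subset_singleton_add_sub_self (ha : a ∈ A) : (A : Set α) ⊆ {a} + ↑(A - A) := by
  intro x hx
  rw [Set.singleton_add]
  exact ⟨x - a, sub_mem_sub hx ha, add_sub_cancel a x⟩

theorem exists_addSubgroup_of_two_mul_card_add_lt (hA : 2 * #(A + B) < 3 * #A)
    (hB : 2 * #(A + B) < 3 * #B) :
    ∃ H : AddSubgroup α, (H : Set α).ncard ≤ #(A + B) ∧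
      (∃ a, (A : Set α) ⊆ {a} + H) ∧ ∃ b, (B : Set α) ⊆ {b} + H := by
  obtain ⟨a, ha⟩ : A.Nonempty := by rw [← card_pos]; omega
  obtain ⟨b, hb⟩ : B.Nonempty := by rw [← card_pos]; omega
  have hAB := sub_self_eq_of_two_mul_card_add_lt hA hB
  have hsub : A - A - (A - A) ⊆ A - A := (sub_sub_sub_subset_sub hB).trans hAB.ge
  have hcardA := card_sub_self_lt_two_mul ⟨a, ha⟩ fun x hx ↦
    card_lt_two_mul_addConvolution (B := A) (by rwa [add_comm]) (hAB ▸ hx)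
  have hcardB := card_sub_self_lt_two_mul ⟨b, hb⟩ fun x hx ↦
    card_lt_two_mul_addConvolution hB (hAB ▸ hx)
  let H := AddSubgroup.ofSub ((A - A : Finset α) : Set α) ⟨0, Nonempty.zero_mem_sub ⟨a, ha⟩⟩
    fun x hx y hy ↦ sub_eq_add_neg x y ▸ hsub (sub_mem_sub hx hy)
  have hH : (H : Set α) = ↑(A - A) := rfl
  refine ⟨H, ?_, ⟨a, hH ▸ coe_subset_singleton_add_sub_self ha⟩, ⟨b, ?_⟩⟩
  · rw [hH, Set.ncard_coe_finset]
    rw [← hAB] at hcardB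
    exact card_sub_self_le_card_add ha hb hAB hsub (by omega)
  · rw [hH, hAB]
    exact coe_subset_singleton_add_sub_self hb

end Finset

theorem stmt_8_general {F : Type*} [AddCommGroup F] (n : ℕ) (B G R : Set F)
    (hfinB : B.Finite) (hfinG : G.Finite) (hfinR : R.Finite)
    (hB : B.ncard = n) (hG : G.ncard = n)
    (hR : 2 * R.ncard < 3 * n)
    (hpierce : ∀ b ∈ B, ∀ g ∈ G, ∃ r ∈ R, b + g + r = 0) :
    ∃ H : AddSubgroup F, (H : Set F).ncard ≤ R.ncard ∧
      (∃ a : F, B ⊆ {a} + (H : Set F)) ∧ (∃ a : F, G ⊆ {a} + (H : Set F)) := by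
  classical
  have hBGR : B + G ⊆ -R := Set.add_subset_iff.2 fun b hb g hg ↦ by
    obtain ⟨r, hr, hbgr⟩ := hpierce b hb g hg
    rwa [Set.mem_neg, neg_eq_of_add_eq_zero_right hbgr]
  have hS : (hfinB.toFinset + hfinG.toFinset).card ≤ R.ncard := by
    rw [← Set.ncard_coe_finset, Finset.coe_add, Set.Finite.coe_toFinset, Set.Finite.coe_toFinset,
      ← Set.ncard_neg R]
    exact Set.ncard_le_ncard hBGR hfinR.neg
  obtain ⟨H, hH, hBH, hGH⟩ := Finset.exists_addSubgroup_of_two_mul_card_add_lt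
    (A := hfinB.toFinset) (B := hfinG.toFinset)
    (by rw [← Set.ncard_eq_toFinset_card B hfinB]; omega)
    (by rw [← Set.ncard_eq_toFinset_card G hfinG]; omega)
  exact ⟨H, hH.trans hS, by simpa using hBH, by simpa using hGH⟩

/-- Theorem (bipartite, irreducible cubic, modelled by its abelian group `F` where three
points are collinear iff they sum to zero): if `B, G, R` are pairwise disjoint finite
subsets of `F` with `|B| = |G| = n`, `|R| < (3/2)n`, and every line through a point of
`B` and a point of `G` passes through a point of `R` (i.e. `∀ b ∈ B, g ∈ G, ∃ r ∈ R,
b + g + r = 0`), then there is a subgroup `H` of `F` with `|H| ≤ |R|` such that `B` and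
`G` are each contained in a coset of `H`. -/
theorem stmt_8 {F : Type*} [AddCommGroup F] (n : ℕ) (B G R : Set F)
    (hfinB : B.Finite) (hfinG : G.Finite) (hfinR : R.Finite)
    (hBG : Disjoint B G) (hBR : Disjoint B R) (hGR : Disjoint G R)
    (hB : B.ncard = n) (hG : G.ncard = n)
    (hR : 2 * R.ncard < 3 * n)
    (hpierce : ∀ b ∈ B, ∀ g ∈ G, ∃ r ∈ R, b + g + r = 0) :
    ∃ H : AddSubgroup F, (H : Set F).ncard ≤ R.ncard ∧
      (∃ a : F, B ⊆ {a} + (H : Set F)) ∧ (∃ a : F, G ⊆ {a} + (H : Set F)) :=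
  stmt_8_general n B G R hfinB hfinG hfinR hB hG hR hpierce
end

section
/- Let k be odd, Z the vertex set of a regular k-gon inscribed in a circle Q centered at the origin, and Z' a rotation of Z by an angle that is an irrational multiple of π. Set B = Z ∪ (−Z') and G = (−Z) ∪ Z'. Then |B| = |G| = 2k, B ∩ G = ∅, and the set of directions of lines through a point of B and a point of G has exactly 3k elements. -/
open Real Pointwise


noncomputable def ept (ρ θ : ℝ) : ℝ × ℝ := ρ • ((Real.cos θ, Real.sin θ) : ℝ × ℝ)

noncomputable def nvec (θ : ℝ) : ℝ × ℝ := (-Real.sin θ, Real.cos θ)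

noncomputable def Dir (s : ℝ) : Submodule ℝ (ℝ × ℝ) := Submodule.span ℝ {nvec (s/2)}

lemma ept_eq_iff {ρ α β : ℝ} (hρ : ρ ≠ 0) :
    ept ρ α = ept ρ β ↔ ∃ m : ℤ, α - β = 2 * π * m := by
  constructor
  · intro h
    rw [ept, ept, Prod.ext_iff] at h
    simp only [Prod.smul_fst, Prod.smul_snd, smul_eq_mul] at h
    have hc : Real.cos α = Real.cos β := mul_left_cancel₀ hρ h.1
    have hs : Real.sin α = Real.sin β := mul_left_cancel₀ hρ h.2
    have h1 : Real.cos (α - β) = 1 := by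
      rw [Real.cos_sub, hc, hs]
      nlinarith [Real.sin_sq_add_cos_sq β]
    obtain ⟨n, hn⟩ := (Real.cos_eq_one_iff _).1 h1
    exact ⟨n, by linarith⟩
  · rintro ⟨m, hm⟩
    have hα : α = β + m * (2 * π) := by linarith
    rw [ept, ept, hα, Real.cos_add_int_mul_two_pi, Real.sin_add_int_mul_two_pi]

lemma neg_ept (ρ θ : ℝ) : -(ept ρ θ) = ept ρ (θ + π) := by
  simp [ept, Real.cos_add_pi, Real.sin_add_pi, Prod.ext_iff, mul_neg]

lemma ept_diff (ρ α β : ℝ) :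
    ept ρ α - ept ρ β = (ρ * (2 * Real.sin ((α - β)/2))) • nvec ((α + β)/2) := by
  simp only [ept, nvec, Prod.ext_iff, Prod.smul_fst, Prod.smul_snd, smul_eq_mul,
    Prod.fst_sub, Prod.snd_sub]
  constructor
  · linear_combination ρ * Real.cos_sub_cos α β
  · linear_combination ρ * Real.sin_sub_sin α β

lemma span_nvec_eq_iff {φ ψ : ℝ} :
    Submodule.span ℝ {nvec φ} = Submodule.span ℝ {nvec ψ} ↔ Real.sin (φ - ψ) = 0 := by
  constructor
  · intro h
    have hmem : nvec φ ∈ Submodule.span ℝ {nvec ψ} := by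
      rw [← h]; exact Submodule.mem_span_singleton_self _
    obtain ⟨c, hc⟩ := Submodule.mem_span_singleton.1 hmem
    rw [nvec, nvec, Prod.ext_iff] at hc
    simp only [Prod.smul_fst, Prod.smul_snd, smul_eq_mul] at hc
    rw [Real.sin_sub]
    obtain ⟨h1, h2⟩ := hc
    linear_combination Real.cos ψ * h1 + Real.sin ψ * h2
  · intro h
    have hcos : Real.cos (φ - ψ) ≠ 0 := by
      intro h0
      nlinarith [Real.sin_sq_add_cos_sq (φ - ψ)]
    have key : nvec φ = Real.cos (φ - ψ) • nvec ψ := by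
      rw [nvec, nvec, Prod.ext_iff]
      simp only [Prod.smul_fst, Prod.smul_snd, smul_eq_mul]
      constructor
      · have : Real.sin φ = Real.sin (ψ + (φ - ψ)) := by ring_nf
        rw [this, Real.sin_add, h]; ring
      · have : Real.cos φ = Real.cos (ψ + (φ - ψ)) := by ring_nf
        rw [this, Real.cos_add, h]; ring
    rw [key, Submodule.span_singleton_smul_eq (IsUnit.mk0 _ hcos)]

lemma dir_eq_iff {s t : ℝ} : Dir s = Dir t ↔ ∃ m : ℤ, s - t = 2 * π * m := by
  rw [Dir, Dir, span_nvec_eq_iff]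
  have : s/2 - t/2 = (s-t)/2 := by ring
  rw [this, Real.sin_eq_zero_iff]
  constructor
  · rintro ⟨n, hn⟩; exact ⟨n, by linarith⟩
  · rintro ⟨m, hm⟩; exact ⟨m, by linarith⟩

lemma chord_dir {ρ α β : ℝ} (hρ : ρ ≠ 0) (h : Real.sin ((α - β)/2) ≠ 0) :
    Submodule.span ℝ {ept ρ α - ept ρ β} = Dir (α + β) := by
  rw [ept_diff, Dir]
  exact Submodule.span_singleton_smul_eq
    (IsUnit.mk0 _ (mul_ne_zero hρ (mul_ne_zero two_ne_zero h))) _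

lemma no_rel {γ : ℝ} (hγ : Irrational (γ / π)) {k : ℕ} (hk : k ≠ 0) (a b c : ℤ) (hc : c ≠ 0)
    (h : (c : ℝ) * γ = (a : ℝ) * π + (b : ℝ) * (2 * π / (k : ℝ))) : False := by
  have hπ : (π : ℝ) ≠ 0 := Real.pi_ne_zero
  have hk' : ((k : ℝ)) ≠ 0 := Nat.cast_ne_zero.2 hk
  have hc' : ((c : ℝ)) ≠ 0 := Int.cast_ne_zero.2 hc
  apply hγ
  refine ⟨(a * k + 2 * b) / (c * k), ?_⟩
  push_cast
  rw [div_eq_div_iff (mul_ne_zero hc' hk') hπ]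
  linear_combination (-(k : ℝ)) * h + (-2 * (b : ℝ) * π) * (mul_inv_cancel₀ hk')

lemma parity_real {k : ℕ} (hodd : Odd k) (d n : ℤ)
    (h : 2 * (d : ℝ) * π = (k : ℝ) * (2 * (n : ℝ) + 1) * π) : False := by
  have h2 : (2 * d : ℤ) = (k : ℤ) * (2 * n + 1) := by
    have := mul_right_cancel₀ Real.pi_ne_zero h
    exact_mod_cast this
  have hoddk : Odd ((k : ℤ)) := Int.odd_coe_nat k |>.2 hodd
  have : Odd ((k : ℤ) * (2 * n + 1)) := hoddk.mul ⟨n, by ring⟩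
  rw [← h2] at this
  exact ((Int.not_odd_iff_even.2 (even_two_mul d))) this

lemma parity_u {k : ℕ} (hodd : Odd k) (hk : k ≠ 0) (d n : ℤ)
    (h : (d : ℝ) * (2 * π / (k : ℝ)) = (2 * (n : ℝ) + 1) * π) : False := by
  have hk' : ((k : ℝ)) ≠ 0 := Nat.cast_ne_zero.2 hk
  apply parity_real hodd d n
  linear_combination (k : ℝ) * h + (-(2 * (d : ℝ) * π)) * (mul_inv_cancel₀ hk')

lemma int_rel {k : ℕ} (hk : k ≠ 0) {i j : ℕ} (m : ℤ) (hi : i < k) (hj : j < k)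
    (h : (i : ℝ) * (2 * π / (k : ℝ)) - (j : ℝ) * (2 * π / (k : ℝ)) = (m : ℝ) * (2 * π)) :
    i = j := by
  have hk' : ((k : ℝ)) ≠ 0 := Nat.cast_ne_zero.2 hk
  have h2 : ((i : ℝ) - j) * (2 * π) = ((m * k : ℤ) : ℝ) * (2 * π) := by
    push_cast
    linear_combination (k : ℝ) * h + (((j : ℝ) - i) * 2 * π) * (mul_inv_cancel₀ hk')
  have h3 : (i : ℤ) - j = m * k := by
    have := mul_right_cancel₀ (by positivity : (2 * π : ℝ) ≠ 0) h2
    exact_mod_cast this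
  have hdvd : ((k : ℤ)) ∣ (i : ℤ) - j := ⟨m, by rw [h3]; ring⟩
  have h0 : (i : ℤ) - j = 0 := Int.eq_zero_of_abs_lt_dvd hdvd (abs_lt.2 ⟨by omega, by omega⟩)
  omega

noncomputable def Efam (ρ : ℝ) (k : ℕ) (c : ℝ) : Set (ℝ × ℝ) :=
  (fun j : ℕ => ept ρ (2 * π * j / k + c)) '' {j | j < k}

noncomputable def Ffam (k : ℕ) (c : ℝ) : Set (Submodule ℝ (ℝ × ℝ)) :=
  (fun m : ℕ => Dir (2 * π * m / k + c)) '' {m | m < k}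

lemma Efam_neg (ρ : ℝ) (k : ℕ) (c : ℝ) : -(Efam ρ k c) = Efam ρ k (c + π) := by
  ext x
  simp only [Set.mem_neg, Efam, Set.mem_image, Set.mem_setOf_eq]
  constructor
  · rintro ⟨j, hj, hx⟩
    exact ⟨j, hj, by
      rw [show 2*π*(j:ℝ)/k + (c+π) = (2*π*j/k + c) + π from by ring, ← neg_ept, hx, neg_neg]⟩
  · rintro ⟨j, hj, hx⟩
    refine ⟨j, hj, ?_⟩
    rw [← hx, show 2*π*(j:ℝ)/k + (c+π) = (2*π*j/k + c) + π from by ring, ← neg_ept, neg_neg]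

lemma Efam_injOn {ρ : ℝ} (hρ : ρ ≠ 0) {k : ℕ} (hk : k ≠ 0) (c : ℝ) :
    Set.InjOn (fun j : ℕ => ept ρ (2 * π * j / k + c)) {j | j < k} := by
  intro i hi j hj h
  obtain ⟨m, hm⟩ := (ept_eq_iff hρ).1 h
  exact int_rel hk m hi hj (by push_cast; linear_combination hm)

lemma Efam_ncard {ρ : ℝ} (hρ : ρ ≠ 0) {k : ℕ} (hk : k ≠ 0) (c : ℝ) :
    (Efam ρ k c).ncard = k := by
  rw [Efam, Set.ncard_image_of_injOn (Efam_injOn hρ hk c),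
    show {j : ℕ | j < k} = ↑(Finset.range k) from by ext; simp,
    Set.ncard_coe_finset, Finset.card_range]

lemma Efam_finite (ρ : ℝ) (k : ℕ) (c : ℝ) : (Efam ρ k c).Finite :=
  (Set.finite_Iio k).image _

lemma Efam_disj {ρ : ℝ} (hρ : ρ ≠ 0) {k : ℕ} {c d : ℝ}
    (h : ∀ (i j : ℕ), i < k → j < k → ∀ m : ℤ,
      (2 * π * i / k + c) - (2 * π * j / k + d) ≠ 2 * π * m) :
    Disjoint (Efam ρ k c) (Efam ρ k d) := by
  rw [Set.disjoint_left]
  rintro x ⟨i, hi, rfl⟩ ⟨j, hj, hx⟩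
  obtain ⟨m, hm⟩ := (ept_eq_iff hρ).1 hx.symm
  exact h i j hi hj m hm

lemma Ffam_injOn {k : ℕ} (hk : k ≠ 0) (c : ℝ) :
    Set.InjOn (fun m : ℕ => Dir (2 * π * m / k + c)) {m | m < k} := by
  intro i hi j hj h
  obtain ⟨m, hm⟩ := dir_eq_iff.1 h
  exact int_rel hk m hi hj (by push_cast; linear_combination hm)

lemma Ffam_ncard {k : ℕ} (hk : k ≠ 0) (c : ℝ) : (Ffam k c).ncard = k := by
  rw [Ffam, Set.ncard_image_of_injOn (Ffam_injOn hk c),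
    show {j : ℕ | j < k} = ↑(Finset.range k) from by ext; simp,
    Set.ncard_coe_finset, Finset.card_range]

lemma Ffam_finite (k : ℕ) (c : ℝ) : (Ffam k c).Finite :=
  (Set.finite_Iio k).image _

lemma Ffam_disj {k : ℕ} {c d : ℝ}
    (h : ∀ (i j : ℕ), i < k → j < k → ∀ m : ℤ,
      (2 * π * i / k + c) - (2 * π * j / k + d) ≠ 2 * π * m) :
    Disjoint (Ffam k c) (Ffam k d) := by
  rw [Set.disjoint_left]
  rintro x ⟨i, hi, rfl⟩ ⟨j, hj, hx⟩
  obtain ⟨m, hm⟩ := dir_eq_iff.1 hx.symm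
  exact h i j hi hj m hm

lemma Efam_mem {ρ : ℝ} {k : ℕ} {c : ℝ} {x : ℝ × ℝ} :
    x ∈ Efam ρ k c ↔ ∃ j : ℕ, j < k ∧ ept ρ (2 * π * j / k + c) = x := by
  simp [Efam, Set.mem_image]

lemma Ffam_mem {k : ℕ} {c : ℝ} {d : Submodule ℝ (ℝ × ℝ)} :
    d ∈ Ffam k c ↔ ∃ m : ℕ, m < k ∧ Dir (2 * π * m / k + c) = d := by
  simp [Ffam, Set.mem_image]

lemma dir_mem {k : ℕ} (hk : k ≠ 0) (c : ℝ) (i j : ℕ) (hi : i < k) (hj : j < k) (e : ℤ)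
    (s : ℝ) (hs : s = 2 * π * i / k + 2 * π * j / k + c + e * (2 * π)) :
    Dir s ∈ Ffam k c := by
  have hkpos : 0 < k := Nat.pos_of_ne_zero hk
  have hk' : ((k : ℝ)) ≠ 0 := Nat.cast_ne_zero.2 hk
  obtain ⟨q, m, hm, hqm⟩ : ∃ q m, m < k ∧ k * q + m = i + j :=
    ⟨(i + j) / k, (i + j) % k, Nat.mod_lt _ hkpos, Nat.div_add_mod _ _⟩
  refine Ffam_mem.2 ⟨m, hm, ?_⟩
  refine dir_eq_iff.2 ⟨-(q : ℤ) - e, ?_⟩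
  have hqr : (k : ℝ) * q + (m : ℝ) = (i : ℝ) + j := by exact_mod_cast hqm
  rw [hs]
  push_cast
  linear_combination (2 * π / (k : ℝ)) * hqr +
    (-(2 * π * (q : ℝ))) * (mul_inv_cancel₀ hk')



/-- Let `k` be odd, `Z` the vertex set of a regular `k`-gon inscribed in a circle of
radius `ρ` centered at the origin, and `Z'` its rotation by an angle `γ` with `γ/π`
irrational. Set `B = Z ∪ (-Z')` and `G = (-Z) ∪ Z'`. Then `|B| = |G| = 2k`, `B ∩ G = ∅`,
and the lines through a point of `B` and a point of `G` have exactly `3k` distinct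
directions. -/
theorem stmt_18 (k : ℕ) (hodd : Odd k) (hk : 3 ≤ k) (ρ γ : ℝ) (hρ : 0 < ρ)
    (hγ : Irrational (γ / π))
    (Z Z' B G : Set (ℝ × ℝ))
    (hZ : Z = (fun j : ℕ =>
      ρ • (Real.cos (2 * π * j / k), Real.sin (2 * π * j / k))) '' {j | j < k})
    (hZ' : Z' = (fun j : ℕ =>
      ρ • (Real.cos (2 * π * j / k + γ), Real.sin (2 * π * j / k + γ))) '' {j | j < k})
    (hB : B = Z ∪ (-Z')) (hG : G = (-Z) ∪ Z') :
    B.ncard = 2 * k ∧ G.ncard = 2 * k ∧ B ∩ G = ∅ ∧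
    Set.ncard {d : Submodule ℝ (ℝ × ℝ) |
      ∃ b ∈ B, ∃ g ∈ G, d = Submodule.span ℝ {b - g}} = 3 * k := by
  have hρ' : ρ ≠ 0 := ne_of_gt hρ
  have hk0 : k ≠ 0 := by omega
  have hkpos : 0 < k := by omega
  have hk' : ((k : ℝ)) ≠ 0 := Nat.cast_ne_zero.2 hk0
  -- identify the four point families
  have hZE : Z = Efam ρ k 0 := by
    rw [hZ, Efam]
    exact Set.image_congr (fun j _ => by simp [ept])
  have hZ'E : Z' = Efam ρ k γ := by
    rw [hZ', Efam]
    exact Set.image_congr (fun j _ => by simp [ept])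
  have hnZE : -Z = Efam ρ k π := by
    rw [hZE, Efam_neg, zero_add]
  have hnZ'E : -Z' = Efam ρ k (γ + π) := by rw [hZ'E, Efam_neg]
  have hBE : B = Efam ρ k 0 ∪ Efam ρ k (γ + π) := by rw [hB, hZE, hnZ'E]
  have hGE : G = Efam ρ k π ∪ Efam ρ k γ := by rw [hG, hnZE, hZ'E]
  -- disjointness of point families
  have dB : Disjoint (Efam ρ k 0) (Efam ρ k (γ + π)) := by
    refine Efam_disj hρ' (fun i j hi hj m hm => ?_)
    exact no_rel hγ hk0 (-1 - 2*m) ((i:ℤ) - j) 1 one_ne_zero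
      (by push_cast; linear_combination -hm)
  have dG : Disjoint (Efam ρ k π) (Efam ρ k γ) := by
    refine Efam_disj hρ' (fun i j hi hj m hm => ?_)
    exact no_rel hγ hk0 (1 - 2*m) ((i:ℤ) - j) 1 one_ne_zero
      (by push_cast; linear_combination -hm)
  have d0π : Disjoint (Efam ρ k 0) (Efam ρ k π) := by
    refine Efam_disj hρ' (fun i j hi hj m hm => ?_)
    exact parity_u hodd hk0 ((i:ℤ) - j) m (by push_cast; linear_combination hm)
  have d0γ : Disjoint (Efam ρ k 0) (Efam ρ k γ) := by
    refine Efam_disj hρ' (fun i j hi hj m hm => ?_)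
    exact no_rel hγ hk0 (-2*m) ((i:ℤ) - j) 1 one_ne_zero
      (by push_cast; linear_combination -hm)
  have dγππ : Disjoint (Efam ρ k (γ + π)) (Efam ρ k π) := by
    refine Efam_disj hρ' (fun i j hi hj m hm => ?_)
    exact no_rel hγ hk0 (2*m) ((j:ℤ) - i) 1 one_ne_zero
      (by push_cast; linear_combination hm)
  have dγπγ : Disjoint (Efam ρ k (γ + π)) (Efam ρ k γ) := by
    refine Efam_disj hρ' (fun i j hi hj m hm => ?_)
    exact parity_u hodd hk0 ((i:ℤ) - j) (m - 1) (by push_cast; linear_combination hm)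
  -- cardinalities of B and G
  have hBcard : B.ncard = 2 * k := by
    rw [hBE, Set.ncard_union_eq dB (Efam_finite ρ k 0) (Efam_finite ρ k (γ + π)),
      Efam_ncard hρ' hk0, Efam_ncard hρ' hk0]
    omega
  have hGcard : G.ncard = 2 * k := by
    rw [hGE, Set.ncard_union_eq dG (Efam_finite ρ k π) (Efam_finite ρ k γ),
      Efam_ncard hρ' hk0, Efam_ncard hρ' hk0]
    omega
  have hBG : B ∩ G = ∅ := by
    apply Set.disjoint_iff_inter_eq_empty.1
    rw [hBE, hGE]
    exact Set.disjoint_union_left.2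
      ⟨Set.disjoint_union_right.2 ⟨d0π, d0γ⟩, Set.disjoint_union_right.2 ⟨dγππ, dγπγ⟩⟩
  refine ⟨hBcard, hGcard, hBG, ?_⟩
  -- the direction set
  have hsetD : {d : Submodule ℝ (ℝ × ℝ) | ∃ b ∈ B, ∃ g ∈ G, d = Submodule.span ℝ {b - g}}
      = Ffam k π ∪ Ffam k γ ∪ Ffam k (2*γ + π) := by
    ext d
    simp only [Set.mem_setOf_eq, Set.mem_union]
    constructor
    · rintro ⟨b, hb, g, hg, rfl⟩
      rw [hBE] at hb; rw [hGE] at hg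
      simp only [Set.mem_union, Efam_mem] at hb hg
      rcases hb with ⟨i, hi, rfl⟩ | ⟨i, hi, rfl⟩ <;> rcases hg with ⟨j, hj, rfl⟩ | ⟨j, hj, rfl⟩
      · -- Z vs -Z : family π
        rw [chord_dir hρ' (show Real.sin ((2*π*(i:ℝ)/k + 0 - (2*π*(j:ℝ)/k + π))/2) ≠ 0 by
          intro hs
          obtain ⟨n, hn⟩ := Real.sin_eq_zero_iff.1 hs
          exact parity_u hodd hk0 ((i:ℤ) - j) n (by push_cast; linear_combination -2*hn))]
        exact Or.inl (Or.inl (dir_mem hk0 π i j hi hj 0 _ (by push_cast; ring)))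
      · -- Z vs Z' : family γ
        rw [chord_dir hρ' (show Real.sin ((2*π*(i:ℝ)/k + 0 - (2*π*(j:ℝ)/k + γ))/2) ≠ 0 by
          intro hs
          obtain ⟨n, hn⟩ := Real.sin_eq_zero_iff.1 hs
          exact no_rel hγ hk0 (-2*n) ((i:ℤ) - j) 1 one_ne_zero
            (by push_cast; linear_combination 2*hn))]
        exact Or.inl (Or.inr (dir_mem hk0 γ i j hi hj 0 _ (by push_cast; ring)))
      · -- -Z' vs -Z : family γ
        rw [chord_dir hρ' (show Real.sin ((2*π*(i:ℝ)/k + (γ + π) - (2*π*(j:ℝ)/k + π))/2) ≠ 0 by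
          intro hs
          obtain ⟨n, hn⟩ := Real.sin_eq_zero_iff.1 hs
          exact no_rel hγ hk0 (2*n) ((j:ℤ) - i) 1 one_ne_zero
            (by push_cast; linear_combination -2*hn))]
        exact Or.inl (Or.inr (dir_mem hk0 γ i j hi hj 1 _ (by push_cast; ring)))
      · -- -Z' vs Z' : family 2γ+π
        rw [chord_dir hρ' (show Real.sin ((2*π*(i:ℝ)/k + (γ + π) - (2*π*(j:ℝ)/k + γ))/2) ≠ 0 by
          intro hs
          obtain ⟨n, hn⟩ := Real.sin_eq_zero_iff.1 hs
          exact parity_u hodd hk0 ((i:ℤ) - j) (n - 1) (by push_cast; linear_combination -2*hn))]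
        exact Or.inr (dir_mem hk0 (2*γ + π) i j hi hj 0 _ (by push_cast; ring))
    · rintro ((hd | hd) | hd) <;> obtain ⟨m, hm, rfl⟩ := Ffam_mem.1 hd
      · refine ⟨ept ρ (2*π*((0:ℕ):ℝ)/k + 0), ?_, ept ρ (2*π*(m:ℝ)/k + π), ?_, ?_⟩
        · rw [hBE]; exact Or.inl (Efam_mem.2 ⟨0, hkpos, rfl⟩)
        · rw [hGE]; exact Or.inl (Efam_mem.2 ⟨m, hm, rfl⟩)
        · rw [chord_dir hρ' (show Real.sin ((2*π*((0:ℕ):ℝ)/k + 0 - (2*π*(m:ℝ)/k + π))/2) ≠ 0 by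
            intro hs
            obtain ⟨n, hn⟩ := Real.sin_eq_zero_iff.1 hs
            exact parity_u hodd hk0 (-(m:ℤ)) n (by push_cast; linear_combination -2*hn))]
          exact dir_eq_iff.2 ⟨0, by push_cast; ring⟩
      · refine ⟨ept ρ (2*π*((0:ℕ):ℝ)/k + 0), ?_, ept ρ (2*π*(m:ℝ)/k + γ), ?_, ?_⟩
        · rw [hBE]; exact Or.inl (Efam_mem.2 ⟨0, hkpos, rfl⟩)
        · rw [hGE]; exact Or.inr (Efam_mem.2 ⟨m, hm, rfl⟩)
        · rw [chord_dir hρ' (show Real.sin ((2*π*((0:ℕ):ℝ)/k + 0 - (2*π*(m:ℝ)/k + γ))/2) ≠ 0 by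
            intro hs
            obtain ⟨n, hn⟩ := Real.sin_eq_zero_iff.1 hs
            exact no_rel hγ hk0 (-2*n) (-(m:ℤ)) 1 one_ne_zero
              (by push_cast; linear_combination 2*hn))]
          exact dir_eq_iff.2 ⟨0, by push_cast; ring⟩
      · refine ⟨ept ρ (2*π*((0:ℕ):ℝ)/k + (γ + π)), ?_, ept ρ (2*π*(m:ℝ)/k + γ), ?_, ?_⟩
        · rw [hBE]; exact Or.inr (Efam_mem.2 ⟨0, hkpos, rfl⟩)
        · rw [hGE]; exact Or.inr (Efam_mem.2 ⟨m, hm, rfl⟩)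
        · rw [chord_dir hρ' (show Real.sin ((2*π*((0:ℕ):ℝ)/k + (γ + π) - (2*π*(m:ℝ)/k + γ))/2) ≠ 0 by
            intro hs
            obtain ⟨n, hn⟩ := Real.sin_eq_zero_iff.1 hs
            exact parity_u hodd hk0 (-(m:ℤ)) (n - 1) (by push_cast; linear_combination -2*hn))]
          exact dir_eq_iff.2 ⟨0, by push_cast; ring⟩
  -- disjointness of direction families
  have f12 : Disjoint (Ffam k π) (Ffam k γ) := by
    refine Ffam_disj (fun i j hi hj m hm => ?_)
    exact no_rel hγ hk0 (1 - 2*m) ((i:ℤ) - j) 1 one_ne_zero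
      (by push_cast; linear_combination -hm)
  have f13 : Disjoint (Ffam k π) (Ffam k (2*γ + π)) := by
    refine Ffam_disj (fun i j hi hj m hm => ?_)
    exact no_rel hγ hk0 (-2*m) ((i:ℤ) - j) 2 two_ne_zero
      (by push_cast; linear_combination -hm)
  have f23 : Disjoint (Ffam k γ) (Ffam k (2*γ + π)) := by
    refine Ffam_disj (fun i j hi hj m hm => ?_)
    exact no_rel hγ hk0 (-1 - 2*m) ((i:ℤ) - j) 1 one_ne_zero
      (by push_cast; linear_combination -hm)
  rw [hsetD, Set.ncard_union_eq (Set.disjoint_union_left.2 ⟨f13, f23⟩)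
      ((Ffam_finite k π).union (Ffam_finite k γ)) (Ffam_finite k (2*γ + π)),
    Set.ncard_union_eq f12 (Ffam_finite k π) (Ffam_finite k γ),
    Ffam_ncard hk0, Ffam_ncard hk0, Ffam_ncard hk0]
  omega
end

section
/- Let P be a set of n points in general position in the plane with n large (n > 100), and R a set with n ≤ |R| < (3/2)n, disjoint from P, such that every line through two points of P contains a point of R. If P ∪ R is contained in the union of a quadric Q and the line at infinity ℓ, then no point of P lies on ℓ (so P ⊆ Q). -/
/-!
Suppose some `p ∈ P` lies on `ℓ`. No three points of `P` being collinear, at most two lie on `ℓ`,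
so `A = P \ ℓ` has at least `n - 2` points, all on `Q`. The lines `px`, `x ∈ A`, are pairwise
distinct and each carries a point of `R`, which is off `ℓ` because `px` meets `ℓ` only in
`p ∉ R`; hence `|R \ ℓ| ≥ |A|`. Fixing `x₀ ∈ A`, the lines `x₀y`, `y ∈ A \ {x₀}`, likewise carry
distinct points of `R`, which are off `Q` and hence on `ℓ`; hence `|R ∩ ℓ| ≥ |A| - 1`. Together
`|R| ≥ 2n - 5`, contradicting `2|R| < 3n`.

A line cannot meet the nondegenerate conic in three points: the plane spanned by two of them
would then be totally isotropic for the polar form, and a nondegenerate form on a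
`3`-dimensional space has no totally isotropic plane.
-/

/-- The real projective plane. -/
noncomputable abbrev ProjPlane := Projectivization ℝ (Fin 3 → ℝ)

/-- Three points of the projective plane are collinear if their representative lines all
lie in a single subspace of dimension at most `2`. -/
def ProjCollinear (p q r : ProjPlane) : Prop :=
  ∃ W : Submodule ℝ (Fin 3 → ℝ), Module.finrank ℝ W ≤ 2 ∧
    p.submodule ≤ W ∧ q.submodule ≤ W ∧ r.submodule ≤ W

/-- The line at infinity (points with vanishing last homogeneous coordinate). -/
def lineAtInfinity : Set ProjPlane := {p : ProjPlane | p.rep 2 = 0}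

open Module Submodule QuadraticMap
open scoped LinearAlgebra.Projectivization

namespace Projectivization

variable {K V : Type*} [DivisionRing K] [AddCommGroup V] [Module K V]

theorem rep_mem_span_singleton_iff {u v : ℙ K V} : u.rep ∈ K ∙ v.rep ↔ u = v := by
  rw [mem_span_singleton, ← mk_eq_mk_iff' K _ _ u.rep_nonzero v.rep_nonzero, mk_rep, mk_rep]

theorem finrank_span_rep_pair {u v : ℙ K V} (h : u ≠ v) :
    finrank K (span K {u.rep, v.rep}) = 2 := by
  rw [← Matrix.range_cons_cons_empty, finrank_span_eq_card (linearIndependent_pair_iff_ne.2 h)]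
  simp

end Projectivization

namespace QuadraticMap

variable {K V : Type*} [Field K] [AddCommGroup V] [Module K V]

theorem polar_eq_zero_of_map_smul_add_smul_eq_zero {q : QuadraticForm K V} {x y : V} {a b : K}
    (hx : q x = 0) (hy : q y = 0) (hxy : q (a • x + b • y) = 0) (ha : a ≠ 0) (hb : b ≠ 0) :
    polar q x y = 0 := by
  rw [QuadraticMap.map_add (⇑q), QuadraticMap.map_smul, QuadraticMap.map_smul, polar_smul_left,
    polar_smul_right, hx, hy] at hxy
  simpa [ha, hb] using hxy

theorem two_mul_finrank_span_le_of_polar_eq_zero [FiniteDimensional K V]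
    {q : QuadraticForm K V} (hq : (polarBilin q).SeparatingLeft) {s : Set V}
    (hs : ∀ x ∈ s, ∀ y ∈ s, polar q x y = 0) :
    2 * finrank K (span K s) ≤ finrank K V := by
  have hrefl : (polarBilin q).IsRefl := fun x y h => by
    rwa [polarBilin_apply_apply, polar_comm] at h
  have hiso : span K s ≤ LinearMap.BilinForm.orthogonal (polarBilin q) (span K s) := by
    refine span_le.2 fun x hx => ?_
    have : span K s ≤ LinearMap.ker ((polarBilin q).flip x) :=
      span_le.2 fun y hy => hs y hy x hx
    exact fun y hy => this hy
  have hle := finrank_mono hiso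
  rw [LinearMap.BilinForm.finrank_orthogonal (hrefl.nondegenerate_iff_separatingLeft.2 hq)]
    at hle
  have := (span K s).finrank_le
  omega

end QuadraticMap

section Collinearity

variable {a b c p r x y : ProjPlane}

theorem projCollinear_of_rep_mem {W : Submodule ℝ (Fin 3 → ℝ)} (hW : finrank ℝ W ≤ 2)
    (ha : a.rep ∈ W) (hb : b.rep ∈ W) (hc : c.rep ∈ W) : ProjCollinear a b c := by
  refine ⟨W, hW, ?_, ?_, ?_⟩ <;> rwa [Projectivization.submodule_eq, span_singleton_le_iff_mem]

theorem ProjCollinear.swap_right (h : ProjCollinear a b c) : ProjCollinear a c b :=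
  let ⟨W, hW, ha, hb, hc⟩ := h
  ⟨W, hW, ha, hc, hb⟩

theorem projCollinear_iff_rep_mem_span (hab : a ≠ b) :
    ProjCollinear a b c ↔ c.rep ∈ span ℝ {a.rep, b.rep} := by
  refine ⟨fun ⟨W, hW, ha, hb, hc⟩ => ?_, fun h => ?_⟩
  · simp only [Projectivization.submodule_eq, span_singleton_le_iff_mem] at ha hb hc
    have hle : span ℝ {a.rep, b.rep} ≤ W := span_le.2 (Set.pair_subset ha hb)
    rwa [eq_of_le_of_finrank_le hle (by rwa [Projectivization.finrank_span_rep_pair hab])]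
  · exact projCollinear_of_rep_mem (Projectivization.finrank_span_rep_pair hab).le
      (subset_span (by simp)) (subset_span (by simp)) h

/-- Both `x` and `y` lie on the line `pr`. -/
theorem ProjCollinear.of_common_right (hpr : p ≠ r) (hx : ProjCollinear p x r)
    (hy : ProjCollinear p y r) : ProjCollinear p x y :=
  projCollinear_of_rep_mem (Projectivization.finrank_span_rep_pair hpr).le
    (subset_span (by simp)) ((projCollinear_iff_rep_mem_span hpr).1 hx.swap_right)
    ((projCollinear_iff_rep_mem_span hpr).1 hy.swap_right)

theorem finrank_ker_proj_two_le :
    finrank ℝ (LinearMap.ker (LinearMap.proj 2 : (Fin 3 → ℝ) →ₗ[ℝ] ℝ)) ≤ 2 := by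
  have hne : LinearMap.ker (LinearMap.proj 2 : (Fin 3 → ℝ) →ₗ[ℝ] ℝ) ≠ ⊤ := fun h => by
    simpa using (h ▸ mem_top : (Pi.single 2 1 : Fin 3 → ℝ) ∈ LinearMap.ker (LinearMap.proj 2))
  have := Submodule.finrank_lt hne
  simp only [finrank_fin_fun] at this
  omega

theorem projCollinear_of_mem_lineAtInfinity (ha : a ∈ lineAtInfinity)
    (hb : b ∈ lineAtInfinity) (hc : c ∈ lineAtInfinity) : ProjCollinear a b c :=
  projCollinear_of_rep_mem finrank_ker_proj_two_le ha hb hc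

theorem mem_lineAtInfinity_of_projCollinear (hpr : p ≠ r) (hp : p ∈ lineAtInfinity)
    (hr : r ∈ lineAtInfinity) (h : ProjCollinear p x r) : x ∈ lineAtInfinity :=
  have hline : span ℝ {p.rep, r.rep} ≤ LinearMap.ker (LinearMap.proj 2) :=
    span_le.2 (Set.pair_subset hp hr)
  hline ((projCollinear_iff_rep_mem_span hpr).1 h.swap_right)

theorem not_projCollinear_of_map_rep_eq_zero {q : QuadraticForm ℝ (Fin 3 → ℝ)}
    (hq : (polarBilin q).SeparatingLeft) (hab : a ≠ b) (hac : a ≠ c) (hbc : b ≠ c)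
    (ha : q a.rep = 0) (hb : q b.rep = 0) (hc : q c.rep = 0) : ¬ ProjCollinear a b c := by
  rw [projCollinear_iff_rep_mem_span hab]
  intro hcab
  obtain ⟨α, β, hαβ⟩ := mem_span_pair.1 hcab
  have hα : α ≠ 0 := by
    rintro rfl
    exact hbc (Projectivization.rep_mem_span_singleton_iff.1
      (mem_span_singleton.2 ⟨β, by simpa using hαβ⟩)).symm
  have hβ : β ≠ 0 := by
    rintro rfl
    exact hac (Projectivization.rep_mem_span_singleton_iff.1
      (mem_span_singleton.2 ⟨α, by simpa using hαβ⟩)).symm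
  have hpolar : polar q a.rep b.rep = 0 :=
    polar_eq_zero_of_map_smul_add_smul_eq_zero ha hb (hαβ ▸ hc) hα hβ
  have hiso : ∀ u ∈ ({a.rep, b.rep} : Set (Fin 3 → ℝ)), ∀ v ∈ ({a.rep, b.rep} : Set _),
      polar q u v = 0 := by
    rintro u (rfl | rfl) v (rfl | rfl) <;>
      simp [polar_self, polar_comm _ b.rep, ha, hb, hpolar]
  have := two_mul_finrank_span_le_of_polar_eq_zero hq hiso
  rw [Projectivization.finrank_span_rep_pair hab] at this
  simp at this

end Collinearity

def NoThreeCollinear (P : Set ProjPlane) : Prop :=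
  ∀ x ∈ P, ∀ y ∈ P, ∀ z ∈ P, x ≠ y → x ≠ z → y ≠ z → ¬ ProjCollinear x y z

def MeetsAllSecants (R P : Set ProjPlane) : Prop :=
  ∀ x ∈ P, ∀ y ∈ P, x ≠ y → ∃ r ∈ R, ProjCollinear x y r

section PointSets

variable {P R : Set ProjPlane}

theorem NoThreeCollinear.mono {S : Set ProjPlane} (hP : NoThreeCollinear P) (hSP : S ⊆ P) :
    NoThreeCollinear S :=
  fun x hx y hy z hz => hP x (hSP hx) y (hSP hy) z (hSP hz)

theorem MeetsAllSecants.mono {S : Set ProjPlane} (hRP : MeetsAllSecants R P) (hSP : S ⊆ P) :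
    MeetsAllSecants R S :=
  fun x hx y hy => hRP x (hSP hx) y (hSP hy)

theorem NoThreeCollinear.ncard_inter_lineAtInfinity_le_two (hP : NoThreeCollinear P) :
    (P ∩ lineAtInfinity).ncard ≤ 2 := by
  by_contra! h
  obtain ⟨a, ha, b, hb, c, hc, hab, hac, hbc⟩ :=
    (Set.two_lt_ncard (Set.finite_of_ncard_pos (by omega))).1 h
  exact hP a ha.1 b hb.1 c hc.1 hab hac hbc (projCollinear_of_mem_lineAtInfinity ha.2 hb.2 hc.2)

/-- Lines through a fixed `p ∈ P` meet `P` in at most one further point, so choosing on the line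
`px` a point of `T` other than `p` is injective in `x`. -/
theorem NoThreeCollinear.ncard_le_ncard_of_pencil (hP : NoThreeCollinear P) {p : ProjPlane}
    (hp : p ∈ P) {S T : Set ProjPlane} (hSP : S ⊆ P) (hpS : p ∉ S) (hT : T.Finite)
    (h : ∀ x ∈ S, ∃ r ∈ T, r ≠ p ∧ ProjCollinear p x r) : S.ncard ≤ T.ncard := by
  choose! f hfT hfp hf using h
  refine Set.ncard_le_ncard_of_injOn f hfT (fun x hx y hy hxy => ?_) hT
  by_contra hne
  exact hP p hp x (hSP hx) y (hSP hy) (ne_of_mem_of_not_mem hx hpS).symm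
    (ne_of_mem_of_not_mem hy hpS).symm hne
    ((hf x hx).of_common_right (hfp x hx).symm (hxy ▸ hf y hy))

theorem ncard_sdiff_lineAtInfinity_le (hP : NoThreeCollinear P) (hR : R.Finite)
    (hPR : Disjoint P R) (hRP : MeetsAllSecants R P) {p : ProjPlane} (hp : p ∈ P)
    (hpℓ : p ∈ lineAtInfinity) :
    (P \ lineAtInfinity).ncard ≤ (R \ lineAtInfinity).ncard := by
  refine hP.ncard_le_ncard_of_pencil hp Set.sdiff_subset (fun h => h.2 hpℓ) hR.sdiff
    fun x hx => ?_
  obtain ⟨r, hr, hpxr⟩ := hRP p hp x hx.1 (ne_of_mem_of_not_mem hpℓ hx.2)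
  have hpr : p ≠ r := hPR.ne_of_mem hp hr
  exact ⟨r, ⟨hr, fun hrℓ => hx.2 (mem_lineAtInfinity_of_projCollinear hpr hpℓ hrℓ hpxr)⟩,
    hpr.symm, hpxr⟩

theorem ncard_sdiff_singleton_le_ncard_inter_lineAtInfinity (hP : NoThreeCollinear P)
    (hR : R.Finite) (hPR : Disjoint P R) (hRP : MeetsAllSecants R P)
    {q : QuadraticForm ℝ (Fin 3 → ℝ)} (hq : (polarBilin q).SeparatingLeft)
    (hPq : ∀ x ∈ P, q x.rep = 0) (hRq : ∀ r ∈ R, q r.rep = 0 ∨ r ∈ lineAtInfinity)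
    {x₀ : ProjPlane} (hx₀ : x₀ ∈ P) :
    (P \ {x₀}).ncard ≤ (R ∩ lineAtInfinity).ncard := by
  refine hP.ncard_le_ncard_of_pencil hx₀ Set.sdiff_subset (fun h => h.2 rfl)
    (hR.inter_of_left _) fun y hy => ?_
  obtain ⟨r, hr, hx₀yr⟩ := hRP x₀ hx₀ y hy.1 (Ne.symm hy.2)
  have hx₀r : x₀ ≠ r := hPR.ne_of_mem hx₀ hr
  refine ⟨r, ⟨hr, (hRq r hr).resolve_left fun hqr => ?_⟩, hx₀r.symm, hx₀yr⟩
  exact not_projCollinear_of_map_rep_eq_zero hq (Ne.symm hy.2) hx₀r (hPR.ne_of_mem hy.1 hr)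
    (hPq x₀ hx₀) (hPq y hy.1) hqr hx₀yr

end PointSets

theorem stmt_19_general (n : ℕ) (hn : 100 < n) (P R : Set ProjPlane)
    (hfinP : P.Finite) (hfinR : R.Finite)
    (hP : P.ncard = n)
    (hgen : ∀ x ∈ P, ∀ y ∈ P, ∀ z ∈ P, x ≠ y → x ≠ z → y ≠ z → ¬ ProjCollinear x y z)
    (hdisj : Disjoint P R)
    (hRup : 2 * R.ncard < 3 * n)
    (q : QuadraticForm ℝ (Fin 3 → ℝ))
    (hq : ∀ v : Fin 3 → ℝ, (∀ w : Fin 3 → ℝ, QuadraticMap.polar (⇑q) v w = 0) → v = 0)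
    (hcontain : P ∪ R ⊆ {p : ProjPlane | q p.rep = 0} ∪ lineAtInfinity)
    (hpierce : ∀ x ∈ P, ∀ y ∈ P, x ≠ y → ∃ r ∈ R, ProjCollinear x y r) :
    (∀ p ∈ P, p ∉ lineAtInfinity) ∧ P ⊆ {p : ProjPlane | q p.rep = 0} := by
  have hoff : ∀ p ∈ P, p ∉ lineAtInfinity := by
    intro p hp hpℓ
    have hPsplit := Set.ncard_inter_add_ncard_sdiff_eq_ncard P lineAtInfinity hfinP
    have hRsplit := Set.ncard_inter_add_ncard_sdiff_eq_ncard R lineAtInfinity hfinR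
    have hPℓ := NoThreeCollinear.ncard_inter_lineAtInfinity_le_two hgen
    have hRoff := ncard_sdiff_lineAtInfinity_le hgen hfinR hdisj hpierce hp hpℓ
    obtain ⟨x₀, hx₀⟩ : (P \ lineAtInfinity).Nonempty :=
      Set.nonempty_of_ncard_ne_zero (by omega)
    have hRon := ncard_sdiff_singleton_le_ncard_inter_lineAtInfinity
      (NoThreeCollinear.mono hgen Set.sdiff_subset) hfinR (hdisj.mono_left Set.sdiff_subset)
      (MeetsAllSecants.mono hpierce Set.sdiff_subset) hq
      (fun x hx => (hcontain (.inl hx.1)).resolve_right hx.2) (fun r hr => hcontain (.inr hr))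
      hx₀
    have := Set.ncard_sdiff_singleton_of_mem hx₀
    omega
  exact ⟨hoff, fun p hp => (hcontain (.inl hp)).resolve_right (hoff p hp)⟩

/-- Let `P` be a set of `n > 100` points of the projective plane in general position and
`R` a set disjoint from `P` with `n ≤ |R| < (3/2)n` such that every line through two
points of `P` contains a point of `R`. If `P ∪ R` is contained in the union of a
nondegenerate conic `Q` (zero set of a nondegenerate quadratic form `q`) and the line at
infinity `ℓ`, then no point of `P` lies on `ℓ`, so `P` is contained in `Q`. -/
theorem stmt_19 (n : ℕ) (hn : 100 < n) (P R : Set ProjPlane)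
    (hfinP : P.Finite) (hfinR : R.Finite)
    (hP : P.ncard = n)
    (hgen : ∀ x ∈ P, ∀ y ∈ P, ∀ z ∈ P, x ≠ y → x ≠ z → y ≠ z → ¬ ProjCollinear x y z)
    (hdisj : Disjoint P R)
    (hRlow : n ≤ R.ncard) (hRup : 2 * R.ncard < 3 * n)
    (q : QuadraticForm ℝ (Fin 3 → ℝ))
    (hq : ∀ v : Fin 3 → ℝ, (∀ w : Fin 3 → ℝ, QuadraticMap.polar (⇑q) v w = 0) → v = 0)
    (hcontain : P ∪ R ⊆ {p : ProjPlane | q p.rep = 0} ∪ lineAtInfinity)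
    (hpierce : ∀ x ∈ P, ∀ y ∈ P, x ≠ y → ∃ r ∈ R, ProjCollinear x y r) :
    (∀ p ∈ P, p ∉ lineAtInfinity) ∧ P ⊆ {p : ProjPlane | q p.rep = 0} :=
  stmt_19_general n hn P R hfinP hfinR hP hgen hdisj hRup q hq hcontain hpierce
end
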